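/- arXiv:math/0406418 — 11 statements merged into one kernel-verified Lean document; each statement's English description precedes it below -/
import Mathlib

section
/- For subsets M of the integers, define M̄ = M ∪ ((M-1) ∩ (M+1)). Then the closure operator satisfies: the closure of M̄ equals M̄, and if M ⊆ N then M̄ ⊆ N̄. -/
/-- For a set M of integers, M̄ = M ∪ ((M-1) ∩ (M+1)),
where M ± 1 are the translates of M. -/
def barSet (M : Set ℤ) : Set ℤ :=
  M ∪ (((· - 1) '' M) ∩ ((· + 1) '' M))

lemma mem_barSet (M : Set ℤ) (x : ℤ) :
    x ∈ barSet M ↔ x ∈ M ∨ (x + 1 ∈ M ∧ x - 1 ∈ M) := by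
  simp only [barSet, Set.mem_union, Set.mem_inter_iff, Set.mem_image]
  constructor
  · rintro (h | ⟨⟨a, ha, rfl⟩, ⟨b, hb, hb'⟩⟩)
    · exact Or.inl h
    · refine Or.inr ⟨by simpa using ha, ?_⟩
      have : a - 1 - 1 = b := by omega
      rwa [this]
  · rintro (h | ⟨h1, h2⟩)
    · exact Or.inl h
    · exact Or.inr ⟨⟨x + 1, h1, by ring⟩, ⟨x - 1, h2, by ring⟩⟩

/-- The operation M ↦ M̄ satisfies M̄̄ = M̄ and is monotone. -/
theorem stmt2 (M N : Set ℤ) :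
    barSet (barSet M) = barSet M ∧ (M ⊆ N → barSet M ⊆ barSet N) := by
  constructor
  · ext x
    simp only [mem_barSet]
    constructor
    · rintro (h | ⟨h1, h2⟩)
      · exact h
      · rcases h1 with h1 | ⟨h1a, h1b⟩ <;> rcases h2 with h2 | ⟨h2a, h2b⟩
        · exact Or.inr ⟨h1, h2⟩
        · exact Or.inl (by simpa using h2a)
        · exact Or.inl (by simpa using h1b)
        · exact Or.inl (by simpa using h1b)
    · rintro (h | ⟨h1, h2⟩)
      · exact Or.inl (Or.inl h)
      · exact Or.inl (Or.inr ⟨h1, h2⟩)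
  · intro hMN x hx
    rw [mem_barSet] at hx ⊢
    rcases hx with h | ⟨h1, h2⟩
    · exact Or.inl (hMN h)
    · exact Or.inr ⟨hMN h1, hMN h2⟩
end

section
/- Define the relation F ⪯ G on sparse subsets of [n-1] by F ⪯ G if and only if G ⊆ F̄, where F̄ = F ∪ ((F-1) ∩ (F+1)). Then ⪯ is a partial order on the collection of sparse subsets of [n-1]. -/
/-- The collection of sparse subsets of {1,...,n-1}. -/
def sparseSets (n : ℕ) : Finset (Finset ℕ) :=
  ((Finset.Icc 1 (n - 1)).powerset).filter fun F => ∀ i ∈ F, i + 1 ∉ F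

/-- F̄ = F ∪ ((F-1) ∩ (F+1)) for finite sets of naturals (elements of F are ≥ 1). -/
def barFinset (F : Finset ℕ) : Finset ℕ :=
  F ∪ ((F.image (· - 1)) ∩ (F.image (· + 1)))

lemma mem_sparseSets {n : ℕ} {F : Finset ℕ} (h : F ∈ sparseSets n) :
    F ⊆ Finset.Icc 1 (n - 1) ∧ ∀ i ∈ F, i + 1 ∉ F := by
  simpa [sparseSets, Finset.mem_filter, Finset.mem_powerset] using h

lemma zero_not_mem {n : ℕ} {F : Finset ℕ} (h : F ∈ sparseSets n) : 0 ∉ F := by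
  intro h0
  have := (mem_sparseSets h).1 h0
  simp at this

lemma mem_bar {F : Finset ℕ} (hF : 0 ∉ F) {x : ℕ} :
    x ∈ barFinset F ↔ x ∈ F ∨ (x + 1 ∈ F ∧ x - 1 ∈ F) := by
  simp only [barFinset, Finset.mem_union, Finset.mem_inter, Finset.mem_image]
  constructor
  · rintro (h | ⟨⟨a, ha, hax⟩, ⟨b, hb, hbx⟩⟩)
    · exact Or.inl h
    · right
      have ha0 : a ≠ 0 := fun h => hF (h ▸ ha)
      have hb0 : b ≠ 0 := fun h => hF (h ▸ hb)
      have : a = x + 1 := by omega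
      have hbb : b = x - 1 := by omega
      exact ⟨this ▸ ha, hbb ▸ hb⟩
  · rintro (h | ⟨h1, h2⟩)
    · exact Or.inl h
    · right
      have h20 : x - 1 ≠ 0 := fun h => hF (h ▸ h2)
      exact ⟨⟨x + 1, h1, by omega⟩, ⟨x - 1, h2, by omega⟩⟩

lemma step {n : ℕ} {F G : Finset ℕ} (hF : F ∈ sparseSets n) (hG : G ∈ sparseSets n)
    (hGF : G ⊆ barFinset F) (hFG : F ⊆ barFinset G) {x : ℕ}
    (hx : x ∈ F) (hx' : x ∉ G) : x + 2 ∈ F ∧ x + 2 ∉ G := by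
  have h0F := zero_not_mem hF
  have h0G := zero_not_mem hG
  have h1 : x + 1 ∈ G := by
    rcases (mem_bar h0G).1 (hFG hx) with h | ⟨h, _⟩
    · exact absurd h hx'
    · exact h
  have h2 : x + 2 ∈ F := by
    rcases (mem_bar h0F).1 (hGF h1) with h | ⟨h, _⟩
    · exact absurd h ((mem_sparseSets hF).2 x hx)
    · simpa using h
  exact ⟨h2, (mem_sparseSets hG).2 _ h1⟩

/-- The relation F ⪯ G ⟺ G ⊆ F̄ is a partial order (reflexive, antisymmetric,
transitive) on the collection of sparse subsets of [n-1]. -/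
theorem stmt3 (n : ℕ) :
    (∀ F ∈ sparseSets n, F ⊆ barFinset F) ∧
    (∀ F ∈ sparseSets n, ∀ G ∈ sparseSets n,
      G ⊆ barFinset F → F ⊆ barFinset G → F = G) ∧
    (∀ F ∈ sparseSets n, ∀ G ∈ sparseSets n, ∀ H ∈ sparseSets n,
      G ⊆ barFinset F → H ⊆ barFinset G → H ⊆ barFinset F) := by
  refine ⟨fun F _ => Finset.subset_union_left, ?_, ?_⟩
  · -- antisymmetry
    have key : ∀ F ∈ sparseSets n, ∀ G ∈ sparseSets n,
        G ⊆ barFinset F → F ⊆ barFinset G → F ⊆ G := by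
      intro F hF G hG hGF hFG x hx
      by_contra hx'
      have chain : ∀ m : ℕ, x + 2 * m ∈ F ∧ x + 2 * m ∉ G := by
        intro m
        induction m with
        | zero => simpa using ⟨hx, hx'⟩
        | succ k ih =>
          have h := step hF hG hGF hFG ih.1 ih.2
          have e : x + 2 * (k + 1) = x + 2 * k + 2 := by ring
          rw [e]
          exact h
      have hmem := (chain n).1
      have hle := (mem_sparseSets hF).1 hmem
      simp only [Finset.mem_Icc] at hle
      omega
    intro F hF G hG hGF hFG
    exact Finset.Subset.antisymm (key F hF G hG hGF hFG) (key G hG F hF hFG hGF)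
  · -- transitivity
    intro F hF G hG H hH hGF hHG x hx
    have h0F := zero_not_mem hF
    have h0G := zero_not_mem hG
    have h0H := zero_not_mem hH
    rcases (mem_bar h0G).1 (hHG hx) with h | ⟨h1, h2⟩
    · exact hGF h
    · -- x+1 ∈ G, x-1 ∈ G
      have hx1 : x ≥ 1 := by
        have := (mem_sparseSets hH).1 hx
        simp only [Finset.mem_Icc] at this; omega
      have hx2 : x ≥ 2 := by
        have h20 : x - 1 ≠ 0 := fun h => h0G (h ▸ h2)
        omega
      rcases (mem_bar h0F).1 (hGF h1) with hA | ⟨hA1, hA2⟩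
      · rcases (mem_bar h0F).1 (hGF h2) with hB | ⟨hB1, hB2⟩
        · exact (mem_bar h0F).2 (Or.inr ⟨hA, by simpa using hB⟩)
        · have : x ∈ F := by
            have : x - 1 + 1 = x := by omega
            exact this ▸ hB1
          exact (mem_bar h0F).2 (Or.inl this)
      · have : x ∈ F := by simpa using hA2
        exact (mem_bar h0F).2 (Or.inl this)
end

section
/- For every sparse subset F of [n-1], the pseudocomposition γ_F of n defined by J(γ_F) = [0,n-1] \ (F ∪ (F-1)) is almost-odd (its first part b_0 is even and nonnegative, and all subsequent parts are odd), and #F = (n - k(γ_F))/2 where k(γ_F) is the number of parts after the first. -/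
/-- The set J(β) of proper partial sums of a pseudocomposition β = (b_0,...,b_k):
{b_0, b_0+b_1, ..., b_0+⋯+b_{k-1}}. -/
def partialSums (l : List ℕ) : Finset ℕ :=
  (Finset.Icc 1 (l.length - 1)).image fun i => (l.take i).sum

/-- A pseudocomposition of n: a nonempty list (b_0, b_1, ..., b_k) with b_0 ≥ 0,
b_i ≥ 1 for i ≥ 1, summing to n. -/
def isPseudo (n : ℕ) (l : List ℕ) : Prop :=
  l ≠ [] ∧ (∀ a ∈ l.tail, 1 ≤ a) ∧ l.sum = n

/-- Key parity lemma: an interval covered by `F ∪ (F-1)` with good boundary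
conditions has even length. -/
lemma keyEven (n : ℕ) (F : Finset ℕ) (hsp : ∀ i ∈ F, i + 1 ∉ F)
    (hsub : F ⊆ Finset.Icc 1 (n - 1))
    (a b : ℕ) (hbF : b ∉ F) (haF : a = 0 ∨ a - 1 ∉ F.image (· - 1))
    (hcov : ∀ x, a ≤ x → x < b → x ∈ F ∪ F.image (· - 1)) :
    Even (b - a) := by
  rcases le_or_gt b a with h | h
  · simp [Nat.sub_eq_zero_of_le h]
  have hF1 : ∀ f ∈ F, 1 ≤ f := fun f hf => (Finset.mem_Icc.mp (hsub hf)).1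
  set A := (Finset.Ico a b).filter (· ∈ F) with hA
  set B := (Finset.Ico a b).filter (· ∈ F.image (· - 1)) with hB
  have hunion : Finset.Ico a b = A ∪ B := by
    ext x
    simp only [hA, hB, Finset.mem_union, Finset.mem_filter, Finset.mem_Ico]
    constructor
    · intro hx
      have := hcov x hx.1 hx.2
      simp only [Finset.mem_union] at this
      tauto
    · tauto
  have hdisj : Disjoint A B := by
    rw [Finset.disjoint_left]
    intro x hxA hxB
    simp only [hA, hB, Finset.mem_filter, Finset.mem_image] at hxA hxB
    obtain ⟨f, hf, hfx⟩ := hxB.2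
    have : f = x + 1 := by have := hF1 f hf; omega
    exact hsp x hxA.2 (this ▸ hf)
  have hcard : A.card = B.card := by
    apply Finset.card_bij (fun f _ => f - 1)
    · intro f hf
      simp only [hA, Finset.mem_filter, Finset.mem_Ico] at hf
      have hf1 : 1 ≤ f := hF1 f hf.2
      simp only [hB, Finset.mem_filter, Finset.mem_Ico, Finset.mem_image]
      refine ⟨⟨?_, by omega⟩, ⟨f, hf.2, rfl⟩⟩
      -- a ≤ f - 1
      by_contra hlt
      have hfa : f = a := by omega
      rcases haF with h0 | him
      · omega
      · exact him (Finset.mem_image.mpr ⟨f, hf.2, by omega⟩)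
    · intro f hf g hg hfg
      simp only [hA, Finset.mem_filter] at hf hg
      have := hF1 f hf.2; have := hF1 g hg.2; omega
    · intro x hx
      simp only [hB, Finset.mem_filter, Finset.mem_Ico, Finset.mem_image] at hx
      obtain ⟨⟨hax, hxb⟩, f, hf, hfx⟩ := hx
      have hf1 : 1 ≤ f := hF1 f hf
      refine ⟨f, ?_, by omega⟩
      simp only [hA, Finset.mem_filter, Finset.mem_Ico]
      have : f ≠ b := fun h => hbF (h ▸ hf)
      exact ⟨⟨by omega, by omega⟩, hf⟩
  have : b - a = 2 * A.card := by
    have h1 : (Finset.Ico a b).card = A.card + B.card := by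
      rw [hunion]; exact Finset.card_union_of_disjoint hdisj
    rw [Nat.card_Ico] at h1
    omega
  exact ⟨A.card, by omega⟩

/-- Build a pseudocomposition from a sorted list of partial sums. -/
def mkL (n : ℕ) : ℕ → List ℕ → List ℕ
  | p, [] => [n - p]
  | p, x :: xs => (x - p) :: mkL n x xs

lemma mkL_length (n : ℕ) : ∀ s p, (mkL n p s).length = s.length + 1
  | [], _ => rfl
  | x :: xs, p => by simp [mkL, mkL_length n xs x]

lemma mkL_sum (n : ℕ) : ∀ s p, List.Chain (· ≤ ·) p s → (∀ x ∈ s, x ≤ n) → p ≤ n →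
    (mkL n p s).sum = n - p
  | [], p, _, _, hp => by simp [mkL]
  | x :: xs, p, hc, hb, hp => by
    obtain ⟨hpx, hc'⟩ := List.chain_cons.mp hc
    have hx : x ≤ n := hb x (List.mem_cons_self)
    have := mkL_sum n xs x hc' (fun y hy => hb y (List.mem_cons_of_mem _ hy)) hx
    simp only [mkL, List.sum_cons, this]
    omega

lemma mkL_pos (n : ℕ) : ∀ s p, List.Chain (· < ·) p s → (∀ x ∈ s, x < n) → p < n →
    ∀ a ∈ mkL n p s, 1 ≤ a
  | [], p, _, _, hp => by
    intro a ha; simp only [mkL, List.mem_singleton] at ha; omega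
  | x :: xs, p, hc, hb, hp => by
    obtain ⟨hpx, hc'⟩ := List.chain_cons.mp hc
    have hx : x < n := hb x (List.mem_cons_self)
    intro a ha
    simp only [mkL, List.mem_cons] at ha
    rcases ha with rfl | ha
    · omega
    · exact mkL_pos n xs x hc' (fun y hy => hb y (List.mem_cons_of_mem _ hy)) hx a ha

lemma mkL_take (n : ℕ) : ∀ s p, List.Chain (· ≤ ·) p s → ∀ i (h : i < s.length),
    ((mkL n p s).take (i + 1)).sum + p = s.get ⟨i, h⟩
  | x :: xs, p, hc, 0, h => by
    obtain ⟨hpx, _⟩ := List.chain_cons.mp hc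
    simp only [mkL, List.take_succ_cons, List.take_zero, List.sum_cons, List.sum_nil,
      List.get]
    omega
  | x :: xs, p, hc, i + 1, h => by
    obtain ⟨hpx, hc'⟩ := List.chain_cons.mp hc
    have hlen : i < xs.length := by simpa using h
    have hIH := mkL_take n xs x hc' i hlen
    have hge : x ≤ xs.get ⟨i, hlen⟩ := by omega
    simp only [mkL, List.take_succ_cons, List.sum_cons, List.get]
    omega

/-- For a sparse subset F of [n-1], the pseudocomposition γ_F of n with
J(γ_F) = [0,n-1] \ (F ∪ (F-1)) exists, is almost-odd (first part even, remaining
parts odd), and satisfies #F = (n - k(γ_F))/2. -/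
theorem stmt6 (n : ℕ) (hn : 1 ≤ n) (F : Finset ℕ) (hF : F ∈ sparseSets n) :
    (∃ l : List ℕ, isPseudo n l ∧
      partialSums l = Finset.Icc 0 (n - 1) \ (F ∪ F.image (· - 1))) ∧
    ∀ l : List ℕ, isPseudo n l →
      partialSums l = Finset.Icc 0 (n - 1) \ (F ∪ F.image (· - 1)) →
      Even l.headI ∧ (∀ a ∈ l.tail, Odd a) ∧
        2 * F.card = n - (l.length - 1) := by
  simp only [sparseSets, Finset.mem_filter, Finset.mem_powerset] at hF
  obtain ⟨hsub, hsp⟩ := hF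
  set S : Finset ℕ := F ∪ F.image (· - 1) with hS
  set J : Finset ℕ := Finset.Icc 0 (n - 1) \ S with hJdef
  have hF1 : ∀ f ∈ F, 1 ≤ f ∧ f ≤ n - 1 := fun f hf => Finset.mem_Icc.mp (hsub hf)
  have hSsub : S ⊆ Finset.Icc 0 (n - 1) := by
    intro x hx
    simp only [hS, Finset.mem_union, Finset.mem_image] at hx
    simp only [Finset.mem_Icc]
    rcases hx with hx | ⟨f, hf, rfl⟩
    · exact ⟨Nat.zero_le _, (hF1 x hx).2⟩
    · have := hF1 f hf; omega
  have hJmem : ∀ x, x ∈ J ↔ x ≤ n - 1 ∧ x ∉ S := by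
    intro x; simp [hJdef, Finset.mem_sdiff, Finset.mem_Icc]
  have hJS : ∀ x ∈ J, x ∉ S := fun x hx => ((hJmem x).mp hx).2
  have hJn : ∀ x ∈ J, x ≤ n - 1 := fun x hx => ((hJmem x).mp hx).1
  -- cardinality of S and J
  have hScard : S.card = 2 * F.card := by
    rw [hS, Finset.card_union_of_disjoint, Finset.card_image_of_injOn]
    · ring
    · intro f hf g hg hfg
      have := (hF1 f hf).1; have := (hF1 g hg).1
      simp only at hfg; omega
    · rw [Finset.disjoint_left]
      intro x hxF hxI
      simp only [Finset.mem_image] at hxI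
      obtain ⟨f, hf, hfx⟩ := hxI
      have : f = x + 1 := by have := (hF1 f hf).1; omega
      exact hsp x hxF (this ▸ hf)
  have hJcard : J.card + 2 * F.card = n := by
    have hle : S.card ≤ (Finset.Icc 0 (n - 1)).card := Finset.card_le_card hSsub
    have hcIcc : (Finset.Icc 0 (n - 1)).card = n := by rw [Nat.card_Icc]; omega
    have hcd : J.card = (Finset.Icc 0 (n - 1)).card - S.card := by
      rw [hJdef, Finset.card_sdiff_of_subset hSsub]
    omega
  -- parity helpers
  have evenP : ∀ b ∈ J, (∀ x, x < b → x ∈ S) → Even b := by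
    intro b hb hcov
    have := keyEven n F hsp hsub 0 b (fun hbf => hJS b hb (Finset.mem_union_left _ hbf))
      (Or.inl rfl) (fun x _ hx => hcov x hx)
    simpa using this
  have oddGap : ∀ a ∈ J, ∀ b, a < b → b ∉ F →
      (∀ x, a < x → x < b → x ∈ S) → Odd (b - a) := by
    intro a ha b hab hbF hcov
    have haS : a ∉ S := hJS a ha
    have hkey := keyEven n F hsp hsub (a + 1) b hbF
      (Or.inr (by simpa using fun h => haS (Finset.mem_union_right _ h)))
      (fun x hx1 hx2 => hcov x (by omega) hx2)
    obtain ⟨c, hc⟩ := hkey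
    exact ⟨c, by omega⟩
  constructor
  · -- existence
    set s := J.sort (· ≤ ·) with hs
    have hsorted : s.Pairwise (· < ·) := (Finset.sortedLT_sort J).pairwise
    have hsortedle : s.Pairwise (· ≤ ·) := Finset.pairwise_sort (s := J) (r := (· ≤ ·))
    have hmem : ∀ x, x ∈ s ↔ x ∈ J := fun x => Finset.mem_sort _
    have hlt : ∀ x ∈ s, x < n := by
      intro x hx; have := hJn x ((hmem x).mp hx); omega
    have chainle : List.Chain (· ≤ ·) 0 s := by
      cases hs' : s with
      | nil => exact List.Chain.nil
      | cons x xs =>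
        have : List.Chain' (· ≤ ·) (x :: xs) := by
          rw [← hs']; exact List.isChain_iff_pairwise.mpr hsortedle
        exact List.Chain.cons (Nat.zero_le _) this
    refine ⟨mkL n 0 s, ⟨?_, ?_, ?_⟩, ?_⟩
    · cases s with
      | nil => simp [mkL]
      | cons x xs => simp [mkL]
    · -- tail positivity
      cases hs' : s with
      | nil => simp [mkL]
      | cons x xs =>
        simp only [mkL, List.tail_cons]
        have hchain : List.Chain (· < ·) x xs := by
          have : List.Chain' (· < ·) (x :: xs) := by
            rw [← hs']; exact List.isChain_iff_pairwise.mpr hsorted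
          exact this
        exact mkL_pos n xs x hchain
          (fun y hy => hlt y (hs' ▸ List.mem_cons_of_mem _ hy))
          (hlt x (hs' ▸ List.mem_cons_self))
    · have := mkL_sum n s 0 chainle (fun x hx => le_of_lt (hlt x hx)) (Nat.zero_le _)
      simpa using this
    · -- partialSums = J
      ext x
      simp only [partialSums, Finset.mem_image, Finset.mem_Icc, mkL_length,
        Nat.add_sub_cancel]
      constructor
      · rintro ⟨i, ⟨hi1, hi2⟩, hx⟩
        obtain ⟨m, rfl⟩ : ∃ m, i = m + 1 := ⟨i - 1, by omega⟩
        have hm : m < s.length := by omega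
        have := mkL_take n s 0 chainle m hm
        rw [Nat.add_zero] at this
        rw [this] at hx
        exact (hmem x).mp (hx ▸ List.get_mem s ⟨m, hm⟩)
      · intro hx
        obtain ⟨⟨m, hm⟩, hget⟩ := List.mem_iff_get.mp ((hmem x).mpr hx)
        refine ⟨m + 1, ⟨by omega, by omega⟩, ?_⟩
        have := mkL_take n s 0 chainle m hm
        rw [Nat.add_zero] at this
        rw [this, hget]
  · -- universal part
    intro l hl hps
    obtain ⟨hne, htail, hsum⟩ := hl
    obtain ⟨b, t, rfl⟩ : ∃ b t, l = b :: t := by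
      cases l with
      | nil => exact absurd rfl hne
      | cons b t => exact ⟨b, t, rfl⟩
    simp only [List.tail_cons] at htail
    simp only [List.sum_cons] at hsum
    set G : ℕ → ℕ := fun m => b + (t.take m).sum with hG
    -- strict monotonicity of G on [0, t.length]
    have hstep : ∀ m (h : m < t.length), G (m + 1) = G m + t.get ⟨m, h⟩ := by
      intro m h
      simp only [hG, List.sum_take_succ t m h, List.get_eq_getElem]
      omega
    have hmono : ∀ i j, i < j → j ≤ t.length → G i < G j := by
      intro i j hij hj
      induction j with
      | zero => omega
      | succ j ih =>
        have hjt : j < t.length := by omega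
        have hgs := hstep j hjt
        have hget := htail _ (List.get_mem t ⟨j, hjt⟩)
        rcases Nat.lt_or_ge i j with h | h
        · have := ih h (by omega)
          omega
        · have hij' : i = j := by omega
          subst hij'
          omega
    have hmonole : ∀ i j, i ≤ j → j ≤ t.length → G i ≤ G j := by
      intro i j hij hj
      rcases Nat.eq_or_lt_of_le hij with rfl | h
      · exact le_refl _
      · exact le_of_lt (hmono i j h hj)
    -- membership characterization of J
    have hmemJ : ∀ x, x ∈ J ↔ ∃ m < t.length, G m = x := by
      intro x
      rw [← hps]
      simp only [partialSums, Finset.mem_image, Finset.mem_Icc, List.length_cons,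
        Nat.add_sub_cancel]
      constructor
      · rintro ⟨i, ⟨hi1, hi2⟩, hx⟩
        obtain ⟨m, rfl⟩ : ∃ m, i = m + 1 := ⟨i - 1, by omega⟩
        refine ⟨m, by omega, ?_⟩
        simpa [hG, List.take_succ_cons] using hx
      · rintro ⟨m, hm, hx⟩
        refine ⟨m + 1, ⟨by omega, by omega⟩, ?_⟩
        simpa [hG, List.take_succ_cons] using hx
    -- card J = t.length
    have hJeq : J = (Finset.range t.length).image G := by
      ext x
      simp only [Finset.mem_image, Finset.mem_range, hmemJ x]
    have hJcard' : J.card = t.length := by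
      rw [hJeq, Finset.card_image_of_injOn, Finset.card_range]
      intro i hi j hj hij
      simp only [Finset.coe_range, Set.mem_Iio] at hi hj
      by_contra hne'
      rcases Nat.lt_or_ge i j with h | h
      · exact absurd hij (Nat.ne_of_lt (hmono i j h (by omega)))
      · have : j < i := by omega
        exact absurd hij.symm (Nat.ne_of_lt (hmono j i this (by omega)))
    have hcardgoal : 2 * F.card = n - (t.length + 1 - 1) := by omega
    -- G m ∈ J for m < t.length
    have hGJ : ∀ m, m < t.length → G m ∈ J := fun m hm => (hmemJ _).mpr ⟨m, hm, rfl⟩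
    refine ⟨?_, ?_, by simpa using hcardgoal⟩
    · -- headI even
      simp only [List.headI]
      rcases Nat.eq_zero_or_pos t.length with h0 | htlen
      · have ht' : t = [] := List.length_eq_zero_iff.mp h0
        rw [ht'] at hsum
        simp only [List.sum_nil, Nat.add_zero] at hsum
        have h0' : J.card = 0 := by omega
        exact ⟨F.card, by omega⟩
      · have hbJ : b ∈ J := by
          have := hGJ 0 htlen
          simpa [hG] using this
        apply evenP b hbJ
        intro x hx
        by_contra hxS
        have hxJ : x ∈ J := (hJmem x).mpr ⟨by have := hJn b hbJ; omega, hxS⟩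
        obtain ⟨m, hm, hGm⟩ := (hmemJ x).mp hxJ
        have hle' : G 0 ≤ G m := hmonole 0 m (Nat.zero_le _) (le_of_lt hm)
        have hG0 : G 0 = b := by simp [hG]
        omega
    · -- tail odd
      simp only [List.tail_cons]
      intro a ha
      obtain ⟨⟨m, hm⟩, hget⟩ := List.mem_iff_get.mp ha
      have ha1 : 1 ≤ a := htail a ha
      have hGm : G m ∈ J := hGJ m (by omega)
      have hGstep : G (m + 1) = G m + a := by rw [hstep m hm, hget]
      rcases Nat.lt_or_ge (m + 1) t.length with hcase | hcase
      · -- interior gap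
        have hG1J : G (m + 1) ∈ J := hGJ (m + 1) hcase
        have hcov : ∀ x, G m < x → x < G (m + 1) → x ∈ S := by
          intro x hx1 hx2
          by_contra hxS
          have hxJ : x ∈ J := (hJmem x).mpr ⟨by have := hJn _ hG1J; omega, hxS⟩
          obtain ⟨j, hj, hGj⟩ := (hmemJ x).mp hxJ
          have h1 : m < j := by
            by_contra h
            have := hmonole j m (by omega) (by omega)
            omega
          have h2 : j < m + 1 := by
            by_contra h
            have := hmonole (m + 1) j (by omega) (by omega)
            omega
          omega
        have hodd := oddGap (G m) hGm (G (m + 1)) (by omega)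
          (fun h => hJS _ hG1J (Finset.mem_union_left _ h)) hcov
        obtain ⟨c, hc⟩ := hodd
        exact ⟨c, by omega⟩
      · -- last part: m + 1 = t.length
        have hmeq : m + 1 = t.length := by omega
        have hGn : G (m + 1) = n := by
          simp only [hG, hmeq, List.take_length]
          omega
        have hnF : n ∉ F := by
          intro h
          have := hF1 n h
          omega
        have hcov : ∀ x, G m < x → x < n → x ∈ S := by
          intro x hx1 hx2
          by_contra hxS
          have hxJ : x ∈ J := (hJmem x).mpr ⟨by omega, hxS⟩
          obtain ⟨j, hj, hGj⟩ := (hmemJ x).mp hxJ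
          have := hmonole j m (by omega) (by omega)
          omega
        have hodd := oddGap (G m) hGm n (by omega) hnF hcov
        obtain ⟨c, hc⟩ := hodd
        exact ⟨c, by omega⟩
end

section
/- The map F ↦ γ_F is a bijection between sparse subsets of [n-1] and almost-odd compositions of n, where γ_F is the pseudocomposition with J(γ_F) = [0,n-1] \ (F ∪ (F-1)). -/
/-- An almost-odd composition of n: a nonempty list (b_0, b_1, ..., b_k) with
b_0 even, all b_i (i ≥ 1) odd, summing to n. -/
def isAlmostOdd (n : ℕ) (l : List ℕ) : Prop :=
  l ≠ [] ∧ Even l.headI ∧ (∀ a ∈ l.tail, Odd a) ∧ l.sum = n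

open Finset

lemma partialSums_singleton (x : ℕ) : partialSums [x] = ∅ := by
  simp [partialSums]

lemma partialSums_cons (b : ℕ) (t : List ℕ) (ht : t ≠ []) :
    partialSums (b :: t) = insert b ((partialSums t).image (b + ·)) := by
  have hlen : 1 ≤ t.length := List.length_pos_iff.mpr ht
  unfold partialSums
  ext x
  simp only [Finset.mem_image, Finset.mem_insert, Finset.mem_Icc, List.length_cons]
  constructor
  · rintro ⟨i, ⟨h1, h2⟩, rfl⟩
    obtain ⟨j, rfl⟩ : ∃ j, i = j + 1 := ⟨i - 1, by omega⟩
    rcases Nat.eq_zero_or_pos j with rfl | hj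
    · left; simp
    · right
      exact ⟨(t.take j).sum, ⟨j, ⟨by omega, by omega⟩, rfl⟩, by
        rw [List.take_succ_cons, List.sum_cons]⟩
  · rintro (rfl | ⟨y, ⟨j, ⟨hj1, hj2⟩, rfl⟩, rfl⟩)
    · exact ⟨1, ⟨le_refl _, by omega⟩, by simp⟩
    · exact ⟨j + 1, ⟨by omega, by omega⟩, by rw [List.take_succ_cons, List.sum_cons]⟩

lemma partialSums_subset (l : List ℕ) (hpos : ∀ a ∈ l, 0 < a) :
    partialSums l ⊆ Finset.Icc 1 (l.sum - 1) := by
  intro x hx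
  simp only [partialSums, Finset.mem_image, Finset.mem_Icc] at hx ⊢
  obtain ⟨i, ⟨h1, h2⟩, rfl⟩ := hx
  have hlen : i < l.length := by omega
  have htd := List.sum_take_add_sum_drop l i
  have hdrop : 0 < (l.drop i).sum := by
    have hne : l.drop i ≠ [] := by
      intro h; have : (l.drop i).length = l.length - i := List.length_drop; rw [h] at this; simp at this; omega
    exact List.sum_pos _ (fun x hx => hpos x (List.mem_of_mem_drop hx)) hne
  have htake : 0 < (l.take i).sum := by
    have hne : l.take i ≠ [] := by
      intro h; have : (l.take i).length = min i l.length := List.length_take; rw [h] at this; simp at this; omega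
    exact List.sum_pos _ (fun x hx => hpos x (List.mem_of_mem_take hx)) hne
  omega

lemma zero_not_mem_partialSums (l : List ℕ) (hpos : ∀ a ∈ l, 0 < a) :
    0 ∉ partialSums l := by
  intro h
  have := partialSums_subset l hpos h
  simp at this

/-- auxiliary: turn sorted partial-sum values into composition entries -/
def mkListAux (n : ℕ) : ℕ → List ℕ → List ℕ
  | prev, [] => [n - prev]
  | prev, a :: t => (a - prev) :: mkListAux n a t

/-- build a pseudocomposition from the sorted list of its partial sums -/
def mkList (n : ℕ) : List ℕ → List ℕ
  | [] => [n]
  | a :: t => a :: mkListAux n a t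

lemma mkListAux_ne_nil (n prev : ℕ) (s : List ℕ) : mkListAux n prev s ≠ [] := by
  cases s <;> simp [mkListAux]

lemma mkList_ne_nil (n : ℕ) (s : List ℕ) : mkList n s ≠ [] := by
  cases s <;> simp [mkList, mkListAux_ne_nil]

lemma mkListAux_sum (n : ℕ) (s : List ℕ) : ∀ prev, List.Pairwise (· < ·) (prev :: s) →
    (∀ x ∈ prev :: s, x ≤ n) → (mkListAux n prev s).sum = n - prev := by
  induction s with
  | nil => intro prev _ _; simp [mkListAux]
  | cons a t ih =>
    intro prev hs hb
    have hpa : prev < a := (List.pairwise_cons.mp hs).1 a (by simp)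
    have han : a ≤ n := hb a (by simp)
    rw [mkListAux, List.sum_cons, ih a (List.pairwise_cons.mp hs).2
      (fun x hx => hb x (by simp at hx ⊢; tauto))]
    omega

lemma mkList_sum (n : ℕ) (s : List ℕ) (hs : List.Pairwise (· < ·) s)
    (hb : ∀ x ∈ s, x ≤ n) : (mkList n s).sum = n := by
  cases s with
  | nil => simp [mkList]
  | cons a t =>
    have han : a ≤ n := hb a (by simp)
    rw [mkList, List.sum_cons, mkListAux_sum n t a hs hb]
    omega

lemma mkListAux_partialSums (n : ℕ) (s : List ℕ) : ∀ prev, List.Pairwise (· < ·) (prev :: s) →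
    (∀ x ∈ prev :: s, x < n) →
    partialSums (mkListAux n prev s) = s.toFinset.image (· - prev) := by
  induction s with
  | nil => intro prev _ _; simp [mkListAux, partialSums_singleton]
  | cons a t ih =>
    intro prev hs hb
    have hpa : prev < a := (List.pairwise_cons.mp hs).1 a (by simp)
    have hax : ∀ x ∈ t, a < x := fun x hx => ((List.pairwise_cons.mp (List.pairwise_cons.mp hs).2).1 x hx)
    rw [mkListAux, partialSums_cons _ _ (mkListAux_ne_nil _ _ _),
      ih a (List.pairwise_cons.mp hs).2 (fun x hx => hb x (by simp at hx ⊢; tauto))]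
    ext x
    simp only [Finset.mem_insert, Finset.mem_image, List.mem_toFinset, List.toFinset_cons,
      Finset.mem_insert]
    constructor
    · rintro (rfl | ⟨y, ⟨z, hz, rfl⟩, rfl⟩)
      · exact ⟨a, Or.inl rfl, rfl⟩
      · have := hax z hz
        exact ⟨z, Or.inr hz, by omega⟩
    · rintro ⟨z, (rfl | hz), rfl⟩
      · left; rfl
      · right
        have := hax z hz
        exact ⟨z - a, ⟨z, hz, rfl⟩, by omega⟩

lemma mkList_partialSums (n : ℕ) (s : List ℕ) (hs : List.Pairwise (· < ·) s)
    (hb : ∀ x ∈ s, x < n) : partialSums (mkList n s) = s.toFinset := by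
  cases s with
  | nil => simp [mkList, partialSums_singleton]
  | cons a t =>
    rw [mkList, partialSums_cons _ _ (mkListAux_ne_nil _ _ _),
      mkListAux_partialSums n t a hs hb]
    have hax : ∀ x ∈ t, a < x := fun x hx => (List.pairwise_cons.mp hs).1 x hx
    ext x
    simp only [Finset.mem_insert, Finset.mem_image, List.mem_toFinset, List.toFinset_cons,
      Finset.mem_insert]
    constructor
    · rintro (rfl | ⟨y, ⟨z, hz, rfl⟩, rfl⟩)
      · left; rfl
      · have := hax z hz
        right; rwa [show a + (z - a) = z by omega]
    · rintro (rfl | hz)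
      · left; rfl
      · have := hax x hz
        exact Or.inr ⟨x - a, ⟨x, hz, rfl⟩, by omega⟩

lemma mkListAux_odd (n : ℕ) (s : List ℕ) : ∀ prev,
    List.Chain' (fun x y => Odd (y - x)) (prev :: (s ++ [n])) →
    ∀ b ∈ mkListAux n prev s, Odd b := by
  induction s with
  | nil =>
    intro prev hc b hb
    simp only [List.Chain', List.nil_append, List.isChain_cons_cons, List.isChain_singleton, and_true] at hc
    simp only [mkListAux, List.mem_singleton] at hb
    exact hb ▸ hc
  | cons a t ih =>
    intro prev hc b hb
    simp only [List.Chain', List.cons_append, List.isChain_cons_cons] at hc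
    simp only [mkListAux, List.mem_cons] at hb
    rcases hb with rfl | hb
    · exact hc.1
    · exact ih a hc.2 b hb

section Counting

variable {n : ℕ} {F : Finset ℕ}

lemma mem_sparse_iff : F ∈ sparseSets n ↔ F ⊆ Finset.Icc 1 (n-1) ∧ ∀ i ∈ F, i + 1 ∉ F := by
  simp [sparseSets, Finset.mem_filter, Finset.mem_powerset]

lemma mem_U_iff (hsub : F ⊆ Finset.Icc 1 (n-1)) (x : ℕ) :
    x ∈ F ∪ F.image (· - 1) ↔ x ∈ F ∨ x + 1 ∈ F := by
  simp only [Finset.mem_union, Finset.mem_image]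
  constructor
  · rintro (h | ⟨y, hy, rfl⟩)
    · exact Or.inl h
    · have h1 : 1 ≤ y := (Finset.mem_Icc.mp (hsub hy)).1
      right; rwa [show y - 1 + 1 = y by omega]
  · rintro (h | h)
    · exact Or.inl h
    · exact Or.inr ⟨x + 1, h, by omega⟩

lemma image_inter_range (hsub : F ⊆ Finset.Icc 1 (n-1)) (m : ℕ) :
    (F.image (· - 1)) ∩ Finset.range m = (F ∩ Finset.range (m+1)).image (· - 1) := by
  ext x
  simp only [Finset.mem_inter, Finset.mem_image, Finset.mem_range]
  constructor
  · rintro ⟨⟨y, hy, rfl⟩, h2⟩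
    have h1 : 1 ≤ y := (Finset.mem_Icc.mp (hsub hy)).1
    exact ⟨y, ⟨hy, by omega⟩, rfl⟩
  · rintro ⟨y, ⟨hy, hlt⟩, rfl⟩
    have h1 : 1 ≤ y := (Finset.mem_Icc.mp (hsub hy)).1
    exact ⟨⟨y, hy, rfl⟩, by omega⟩

lemma countU (hsub : F ⊆ Finset.Icc 1 (n-1)) (hsp : ∀ i ∈ F, i + 1 ∉ F) (m : ℕ) :
    ((F ∪ F.image (· - 1)) ∩ Finset.range m).card
      = (F ∩ Finset.range m).card + (F ∩ Finset.range (m+1)).card := by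
  rw [Finset.union_inter_distrib_right, Finset.card_union_of_disjoint, image_inter_range hsub]
  · congr 1
    apply Finset.card_image_of_injOn
    intro x hx y hy hxy
    have h1 : 1 ≤ x := (Finset.mem_Icc.mp (hsub (Finset.mem_inter.mp hx).1)).1
    have h2 : 1 ≤ y := (Finset.mem_Icc.mp (hsub (Finset.mem_inter.mp hy).1)).1
    simp only at hxy
    omega
  · rw [Finset.disjoint_left]
    rintro x hx hx2
    rw [Finset.mem_inter] at hx hx2
    obtain ⟨y, hy, rfl⟩ := Finset.mem_image.mp hx2.1
    have h1 : 1 ≤ y := (Finset.mem_Icc.mp (hsub hy)).1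
    have : y - 1 + 1 ∈ F := by rwa [show y - 1 + 1 = y by omega]
    exact hsp _ hx.1 this

lemma split_range (hn : 1 ≤ n) (hsub : F ⊆ Finset.Icc 1 (n-1)) {m : ℕ} (hm : m ≤ n) :
    ((F ∪ F.image (· - 1)) ∩ Finset.range m).card
      + ((Finset.Icc 0 (n-1) \ (F ∪ F.image (· - 1))) ∩ Finset.range m).card = m := by
  rw [← Finset.card_union_of_disjoint]
  · have : ((F ∪ F.image (· - 1)) ∩ Finset.range m)
        ∪ ((Finset.Icc 0 (n-1) \ (F ∪ F.image (· - 1))) ∩ Finset.range m) = Finset.range m := by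
      ext x
      simp only [Finset.mem_union, Finset.mem_inter, Finset.mem_sdiff, Finset.mem_range,
        Finset.mem_Icc, Finset.mem_union]
      constructor
      · rintro (⟨_, h⟩ | ⟨_, h⟩) <;> exact h
      · intro hx
        by_cases hu : x ∈ F ∨ x ∈ F.image (· - 1)
        · exact Or.inl ⟨hu, hx⟩
        · exact Or.inr ⟨⟨by omega, hu⟩, hx⟩
    rw [this, Finset.card_range]
  · rw [Finset.disjoint_left]
    rintro x hx hx2
    rw [Finset.mem_inter] at hx hx2
    exact (Finset.mem_sdiff.mp hx2.1).2 hx.1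

end Counting

section Parity

variable {n : ℕ} {F : Finset ℕ}

lemma U_subset_range (hn : 1 ≤ n) (hsub : F ⊆ Finset.Icc 1 (n-1)) :
    (F ∪ F.image (· - 1)) ⊆ Finset.range n := by
  intro x hx
  rw [mem_U_iff hsub] at hx
  rw [Finset.mem_range]
  rcases hx with h | h
  · have := Finset.mem_Icc.mp (hsub h); omega
  · have := Finset.mem_Icc.mp (hsub h); omega

lemma countU_even (hsub : F ⊆ Finset.Icc 1 (n-1)) (hsp : ∀ i ∈ F, i + 1 ∉ F)
    {j : ℕ} (hj : j ∉ F) :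
    ((F ∪ F.image (· - 1)) ∩ Finset.range j).card = 2 * (F ∩ Finset.range j).card := by
  rw [countU hsub hsp]
  have : F ∩ Finset.range (j+1) = F ∩ Finset.range j := by
    ext x
    simp only [Finset.mem_inter, Finset.mem_range]
    constructor
    · rintro ⟨h1, h2⟩
      refine ⟨h1, ?_⟩
      rcases Nat.lt_succ_iff_lt_or_eq.mp h2 with h | rfl
      · exact h
      · exact absurd h1 hj
    · rintro ⟨h1, h2⟩; exact ⟨h1, by omega⟩
  rw [this]; omega

lemma card_sum_at (hn : 1 ≤ n) (hsub : F ⊆ Finset.Icc 1 (n-1)) (hsp : ∀ i ∈ F, i + 1 ∉ F)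
    {j : ℕ} (hj : j ∈ Finset.Icc 0 (n-1) \ (F ∪ F.image (· - 1))) :
    j = 2 * (F ∩ Finset.range j).card
      + ((Finset.Icc 0 (n-1) \ (F ∪ F.image (· - 1))) ∩ Finset.range j).card := by
  rw [Finset.mem_sdiff, Finset.mem_Icc] at hj
  have hjn : j ≤ n := by omega
  have hjF : j ∉ F := fun h => hj.2 (Finset.mem_union_left _ h)
  have := split_range hn hsub hjn
  rw [countU_even hsub hsp hjF] at this
  omega

lemma total_card (hn : 1 ≤ n) (hsub : F ⊆ Finset.Icc 1 (n-1)) (hsp : ∀ i ∈ F, i + 1 ∉ F) :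
    n = 2 * F.card + (Finset.Icc 0 (n-1) \ (F ∪ F.image (· - 1))).card := by
  have h1 := split_range hn hsub (le_refl n)
  have hU : (F ∪ F.image (· - 1)) ∩ Finset.range n = (F ∪ F.image (· - 1)) :=
    Finset.inter_eq_left.mpr (U_subset_range hn hsub)
  have hJ : (Finset.Icc 0 (n-1) \ (F ∪ F.image (· - 1))) ∩ Finset.range n
      = Finset.Icc 0 (n-1) \ (F ∪ F.image (· - 1)) := by
    apply Finset.inter_eq_left.mpr
    intro x hx
    rw [Finset.mem_sdiff, Finset.mem_Icc] at hx
    rw [Finset.mem_range]; omega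
  rw [hU, hJ] at h1
  have hFn : F ∩ Finset.range n = F := by
    apply Finset.inter_eq_left.mpr
    intro x hx
    have := Finset.mem_Icc.mp (hsub hx)
    rw [Finset.mem_range]; omega
  have h2 := countU_even hsub hsp (j := n)
      (fun h => by have := Finset.mem_Icc.mp (hsub h); omega)
  rw [hFn, hU] at h2
  omega

lemma min_even (hn : 1 ≤ n) (hsub : F ⊆ Finset.Icc 1 (n-1)) (hsp : ∀ i ∈ F, i + 1 ∉ F)
    {j : ℕ} (hj : j ∈ Finset.Icc 0 (n-1) \ (F ∪ F.image (· - 1)))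
    (hmin : ∀ z ∈ Finset.Icc 0 (n-1) \ (F ∪ F.image (· - 1)), j ≤ z) :
    Even j := by
  have h := card_sum_at hn hsub hsp hj
  have : (Finset.Icc 0 (n-1) \ (F ∪ F.image (· - 1))) ∩ Finset.range j = ∅ := by
    rw [Finset.eq_empty_iff_forall_notMem]
    intro z hz
    rw [Finset.mem_inter, Finset.mem_range] at hz
    exact absurd (hmin z hz.1) (by omega)
  rw [this] at h
  exact ⟨(F ∩ Finset.range j).card, by simp at h; omega⟩

lemma consec_odd (hn : 1 ≤ n) (hsub : F ⊆ Finset.Icc 1 (n-1)) (hsp : ∀ i ∈ F, i + 1 ∉ F)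
    {x y : ℕ} (hx : x ∈ Finset.Icc 0 (n-1) \ (F ∪ F.image (· - 1)))
    (hy : y ∈ Finset.Icc 0 (n-1) \ (F ∪ F.image (· - 1))) (hxy : x < y)
    (hbetween : ∀ z ∈ Finset.Icc 0 (n-1) \ (F ∪ F.image (· - 1)), z ≤ x ∨ y ≤ z) :
    Odd (y - x) := by
  set J := Finset.Icc 0 (n-1) \ (F ∪ F.image (· - 1)) with hJ
  have h1 := card_sum_at hn hsub hsp hx
  have h2 := card_sum_at hn hsub hsp hy
  rw [← hJ] at h1 h2
  have hins : J ∩ Finset.range y = insert x (J ∩ Finset.range x) := by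
    ext z
    simp only [Finset.mem_inter, Finset.mem_range, Finset.mem_insert]
    constructor
    · rintro ⟨hz1, hz2⟩
      rcases hbetween z hz1 with h | h
      · rcases Nat.eq_or_lt_of_le h with rfl | h
        · exact Or.inl rfl
        · exact Or.inr ⟨hz1, h⟩
      · omega
    · rintro (rfl | ⟨hz1, hz2⟩)
      · exact ⟨hx, hxy⟩
      · exact ⟨hz1, by omega⟩
  have hxmem : x ∉ J ∩ Finset.range x := by simp
  have hcard : (J ∩ Finset.range y).card = (J ∩ Finset.range x).card + 1 := by
    rw [hins, Finset.card_insert_of_notMem hxmem]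
  have hmono : (F ∩ Finset.range x).card ≤ (F ∩ Finset.range y).card :=
    Finset.card_le_card (by
      intro z hz
      simp only [Finset.mem_inter, Finset.mem_range] at hz ⊢
      exact ⟨hz.1, by omega⟩)
  exact ⟨(F ∩ Finset.range y).card - (F ∩ Finset.range x).card, by omega⟩

lemma last_odd (hn : 1 ≤ n) (hsub : F ⊆ Finset.Icc 1 (n-1)) (hsp : ∀ i ∈ F, i + 1 ∉ F)
    {x : ℕ} (hx : x ∈ Finset.Icc 0 (n-1) \ (F ∪ F.image (· - 1)))
    (hmax : ∀ z ∈ Finset.Icc 0 (n-1) \ (F ∪ F.image (· - 1)), z ≤ x) :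
    Odd (n - x) := by
  set J := Finset.Icc 0 (n-1) \ (F ∪ F.image (· - 1)) with hJ
  have h1 := card_sum_at hn hsub hsp hx
  have h2 := total_card hn hsub hsp
  rw [← hJ] at h1 h2
  have hxr : J ∩ Finset.range x = J.erase x := by
    ext z
    simp only [Finset.mem_inter, Finset.mem_range, Finset.mem_erase]
    constructor
    · rintro ⟨hz1, hz2⟩; exact ⟨by omega, hz1⟩
    · rintro ⟨hz1, hz2⟩
      have := hmax z hz2
      exact ⟨hz2, by omega⟩
  have hcard : (J ∩ Finset.range x).card = J.card - 1 := by
    rw [hxr, Finset.card_erase_of_mem hx]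
  have hJpos : 1 ≤ J.card := Finset.card_pos.mpr ⟨x, hx⟩
  have hmono : (F ∩ Finset.range x).card ≤ F.card :=
    Finset.card_le_card (Finset.inter_subset_left)
  have hxn : x ≤ n - 1 := by
    have := Finset.mem_sdiff.mp hx
    exact (Finset.mem_Icc.mp this.1).2
  exact ⟨F.card - (F ∩ Finset.range x).card, by omega⟩

lemma empty_even (hn : 1 ≤ n) (hsub : F ⊆ Finset.Icc 1 (n-1)) (hsp : ∀ i ∈ F, i + 1 ∉ F)
    (hempty : Finset.Icc 0 (n-1) \ (F ∪ F.image (· - 1)) = ∅) :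
    Even n := by
  have h2 := total_card hn hsub hsp
  rw [hempty] at h2
  exact ⟨F.card, by simp at h2; omega⟩

end Parity

section Forward

variable {n : ℕ} {F : Finset ℕ}

/-- the sorted list of the complement set -/
noncomputable def gList (n : ℕ) (F : Finset ℕ) : List ℕ :=
  mkList n ((Finset.Icc 0 (n-1) \ (F ∪ F.image (· - 1))).sort (· ≤ ·))

lemma gList_spec (hn : 1 ≤ n) (hsub : F ⊆ Finset.Icc 1 (n-1)) (hsp : ∀ i ∈ F, i + 1 ∉ F) :
    isAlmostOdd n (gList n F) ∧
    partialSums (gList n F) = Finset.Icc 0 (n-1) \ (F ∪ F.image (· - 1)) := by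
  set J := Finset.Icc 0 (n-1) \ (F ∪ F.image (· - 1)) with hJdef
  set s := J.sort (· ≤ ·) with hsdef
  have hsorted : List.Pairwise (· < ·) s := (Finset.sortedLT_sort J).pairwise
  have hmem : ∀ x, x ∈ s ↔ x ∈ J := fun x => Finset.mem_sort _
  have hJbound : ∀ x ∈ J, x < n := by
    intro x hx
    rw [hJdef, Finset.mem_sdiff, Finset.mem_Icc] at hx
    omega
  have hb : ∀ x ∈ s, x < n := fun x hx => hJbound x ((hmem x).mp hx)
  have hsm : StrictMono s.get := (Finset.sortedLT_sort J).strictMono_get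
  -- the chain of odd differences
  have hchain : List.Chain' (fun x y => Odd (y - x)) (s ++ [n]) := by
    unfold List.Chain'
    rw [List.isChain_iff_getElem]
    intro i hi
    have hi' : i < s.length := by
      simp only [List.length_append, List.length_singleton] at hi
      omega
    rw [List.getElem_append_left hi']
    have hx : s[i] ∈ J := (hmem _).mp (List.getElem_mem _)
    rcases Nat.lt_or_ge (i+1) s.length with hi2 | hi2
    · -- both inside s
      rw [List.getElem_append_left hi2]
      have hy : s[i+1] ∈ J := (hmem _).mp (List.getElem_mem _)
      have hlt : s[i] < s[i+1] := by
        have := hsm (a := ⟨i, hi'⟩) (b := ⟨i+1, hi2⟩) (by simp)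
        simpa only [List.get_eq_getElem, Fin.val_mk] using this
      apply consec_odd hn hsub hsp hx hy hlt
      intro z hz
      obtain ⟨k, hk⟩ := List.mem_iff_get.mp ((hmem z).mpr hz)
      rcases Nat.lt_or_ge (k : ℕ) (i+1) with h | h
      · left
        have h2 := hsm.monotone (a := k) (b := ⟨i, hi'⟩)
          (Fin.le_iff_val_le_val.mpr (Nat.lt_succ_iff.mp h))
        rw [hk] at h2
        simp only [List.get_eq_getElem, Fin.val_mk] at h2
        omega
      · right
        have h2 := hsm.monotone (a := ⟨i+1, hi2⟩) (b := k) (Fin.le_iff_val_le_val.mpr h)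
        rw [hk] at h2
        simp only [List.get_eq_getElem, Fin.val_mk] at h2
        omega
    · -- last element to n
      have hieq : i + 1 = s.length := by omega
      have h2 : (s ++ [n])[i+1]'(by simp [hieq]) = n :=
        List.getElem_concat_length hieq _
      rw [h2]
      apply last_odd hn hsub hsp hx
      intro z hz
      obtain ⟨k, hk⟩ := List.mem_iff_get.mp ((hmem z).mpr hz)
      have hky : (k : ℕ) ≤ i := by omega
      have h3 := hsm.monotone (a := k) (b := ⟨i, hi'⟩) (Fin.le_iff_val_le_val.mpr hky)
      rw [hk] at h3
      simp only [List.get_eq_getElem, Fin.val_mk] at h3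
      omega
  have hps : partialSums (gList n F) = J := by
    unfold gList
    rw [← hJdef, ← hsdef, mkList_partialSums n s hsorted hb, Finset.sort_toFinset]
  have hsum : (gList n F).sum = n := by
    unfold gList
    rw [← hJdef, ← hsdef]
    exact mkList_sum n s hsorted (fun x hx => le_of_lt (hb x hx))
  have hne : gList n F ≠ [] := by
    unfold gList; exact mkList_ne_nil _ _
  have hgl : gList n F = mkList n s := by
    unfold gList; rw [← hJdef, ← hsdef]
  refine ⟨⟨hne, ?_, ?_, hsum⟩, hps⟩
  · -- head is even
    cases hse : s with
    | nil =>
      rw [hgl, hse]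
      simp only [mkList, List.headI]
      have hJempty : J = ∅ := by
        have h1 := Finset.sort_toFinset (s := J) (r := (· ≤ ·))
        rw [← hsdef, hse] at h1
        simpa using h1.symm
      exact empty_even hn hsub hsp (hJdef ▸ hJempty)
    | cons a t =>
      rw [hgl, hse]
      simp only [mkList, List.headI]
      have ha : a ∈ J := (hmem a).mp (by rw [hse]; exact List.mem_cons_self)
      apply min_even hn hsub hsp ha
      intro z hz
      have hzs : z ∈ s := (hmem z).mpr hz
      rw [hse] at hzs
      rcases List.mem_cons.mp hzs with rfl | hzt
      · exact le_refl z
      · exact le_of_lt ((List.pairwise_cons.mp (hse ▸ hsorted)).1 z hzt)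
  · -- tail is odd
    cases hse : s with
    | nil =>
      rw [hgl, hse]
      simp [mkList]
    | cons a t =>
      rw [hgl, hse]
      simp only [mkList, List.tail_cons]
      apply mkListAux_odd n t a
      rw [hse] at hchain
      rwa [List.cons_append] at hchain

end Forward

section Recover

variable {n : ℕ} {F : Finset ℕ}

lemma recover (hsub : F ⊆ Finset.Icc 1 (n-1)) (hsp : ∀ i ∈ F, i + 1 ∉ F) (i : ℕ) :
    i ∈ F ↔ i ∈ (F ∪ F.image (· - 1)) ∧
      Even (((F ∪ F.image (· - 1)) ∩ Finset.range (i+1)).card) := by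
  have hc := countU hsub hsp (i+1)
  constructor
  · intro hi
    refine ⟨Finset.mem_union_left _ hi, ?_⟩
    have h1 : i + 1 ∉ F := hsp i hi
    have heq : F ∩ Finset.range (i+2) = F ∩ Finset.range (i+1) := by
      ext x
      simp only [Finset.mem_inter, Finset.mem_range]
      constructor
      · rintro ⟨hx1, hx2⟩
        refine ⟨hx1, ?_⟩
        rcases Nat.lt_or_ge x (i+1) with h | h
        · exact h
        · have : x = i + 1 := by omega
          exact absurd (this ▸ hx1) h1
      · rintro ⟨hx1, hx2⟩; exact ⟨hx1, by omega⟩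
    rw [heq] at hc
    exact ⟨(F ∩ Finset.range (i+1)).card, by omega⟩
  · rintro ⟨hu, hev⟩
    by_contra hiF
    rw [mem_U_iff hsub] at hu
    have h1 : i + 1 ∈ F := by tauto
    have heq : F ∩ Finset.range (i+2) = insert (i+1) (F ∩ Finset.range (i+1)) := by
      ext x
      simp only [Finset.mem_inter, Finset.mem_range, Finset.mem_insert]
      constructor
      · rintro ⟨hx1, hx2⟩
        rcases Nat.lt_or_ge x (i+1) with h | h
        · exact Or.inr ⟨hx1, h⟩
        · exact Or.inl (by omega)
      · rintro (rfl | ⟨hx1, hx2⟩)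
        · exact ⟨h1, by omega⟩
        · exact ⟨hx1, by omega⟩
    rw [heq, Finset.card_insert_of_notMem (by simp)] at hc
    obtain ⟨k, hk⟩ := hev
    omega

end Recover

/-- inverse construction: sparse set from the tail of an almost-odd composition -/
def mkF2 : List ℕ → Finset ℕ
  | [] => ∅
  | c :: t => ((Finset.range c).filter fun i => i % 2 = 0 ∧ 2 ≤ i) ∪ (mkF2 t).image (c + ·)

/-- inverse construction: sparse set from an almost-odd composition -/
def mkF : List ℕ → Finset ℕ
  | [] => ∅
  | b :: t => ((Finset.range b).filter fun i => i % 2 = 1) ∪ (mkF2 t).image (b + ·)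

lemma odd_sum_pos {t : List ℕ} (ht : t ≠ []) (hodd : ∀ a ∈ t, Odd a) : 1 ≤ t.sum :=
  List.sum_pos _ (fun x hx => (hodd x hx).pos) ht

lemma mkF2_subset {t : List ℕ} (hodd : ∀ a ∈ t, Odd a) :
    mkF2 t ⊆ Finset.Icc 2 (t.sum - 1) := by
  induction t with
  | nil => simp [mkF2]
  | cons c t' ih =>
    have hc : Odd c := hodd c (by simp)
    intro x hx
    rw [mkF2, Finset.mem_union] at hx
    rcases hx with hx | hx
    · rw [Finset.mem_filter, Finset.mem_range] at hx
      rw [Finset.mem_Icc, List.sum_cons]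
      obtain ⟨k, hk⟩ := hc
      have : 0 ≤ t'.sum := Nat.zero_le _
      omega
    · rw [Finset.mem_image] at hx
      obtain ⟨y, hy, rfl⟩ := hx
      have := ih (fun a ha => hodd a (by simp [ha])) hy
      rw [Finset.mem_Icc] at this ⊢
      rw [List.sum_cons]
      omega

lemma mkF2_sparse {t : List ℕ} (hodd : ∀ a ∈ t, Odd a) :
    ∀ i ∈ mkF2 t, i + 1 ∉ mkF2 t := by
  induction t with
  | nil => simp [mkF2]
  | cons c t' ih =>
    intro i hi hi1
    have hsub' := mkF2_subset (fun a ha => hodd a (List.mem_cons_of_mem _ ha))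
    rw [mkF2, Finset.mem_union] at hi hi1
    rcases hi with hi | hi <;> rcases hi1 with hi1 | hi1
    · rw [Finset.mem_filter] at hi hi1
      omega
    · rw [Finset.mem_filter, Finset.mem_range] at hi
      rw [Finset.mem_image] at hi1
      obtain ⟨y, hy, hxy⟩ := hi1
      have := Finset.mem_Icc.mp (hsub' hy)
      omega
    · rw [Finset.mem_image] at hi
      obtain ⟨y, hy, rfl⟩ := hi
      rw [Finset.mem_filter, Finset.mem_range] at hi1
      have := Finset.mem_Icc.mp (hsub' hy)
      omega
    · rw [Finset.mem_image] at hi hi1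
      obtain ⟨y, hy, rfl⟩ := hi
      obtain ⟨z, hz, hz2⟩ := hi1
      have hyz : z = y + 1 := by omega
      exact ih (fun a ha => hodd a (List.mem_cons_of_mem _ ha)) y hy (hyz ▸ hz)

lemma even_run (c : ℕ) (hc : c % 2 = 1) :
    ((Finset.range c).filter fun i => i % 2 = 0 ∧ 2 ≤ i) ∪
      (((Finset.range c).filter fun i => i % 2 = 0 ∧ 2 ≤ i)).image (· - 1)
    = Finset.Icc 1 (c-1) := by
  ext x
  simp only [Finset.mem_union, Finset.mem_filter, Finset.mem_range, Finset.mem_image,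
    Finset.mem_Icc]
  constructor
  · rintro (⟨h1, h2, h3⟩ | ⟨y, ⟨h1, h2, h3⟩, rfl⟩) <;> omega
  · rintro ⟨h1, h2⟩
    rcases Nat.mod_two_eq_zero_or_one x with h | h
    · left; omega
    · right; exact ⟨x + 1, by omega, by omega⟩

lemma odd_run (b : ℕ) (hb : b % 2 = 0) :
    ((Finset.range b).filter fun i => i % 2 = 1) ∪
      (((Finset.range b).filter fun i => i % 2 = 1)).image (· - 1)
    = Finset.range b := by
  ext x
  simp only [Finset.mem_union, Finset.mem_filter, Finset.mem_range, Finset.mem_image]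
  constructor
  · rintro (⟨h1, h2⟩ | ⟨y, ⟨h1, h2⟩, rfl⟩) <;> omega
  · intro h1
    rcases Nat.mod_two_eq_zero_or_one x with h | h
    · right; exact ⟨x + 1, by omega, by omega⟩
    · left; omega

lemma shift_sub_image (S : Finset ℕ) (h : ∀ x ∈ S, 1 ≤ x) (c : ℕ) :
    (S.image (c + ·)).image (· - 1) = (S.image (· - 1)).image (c + ·) := by
  rw [Finset.image_image, Finset.image_image]
  apply Finset.image_congr
  intro x hx
  have := h x hx
  simp only [Function.comp_apply]
  omega

lemma sdiff_insert_shift {c m : ℕ} (hc : 1 ≤ c) (hm : 1 ≤ m) (J' : Finset ℕ)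
    (hJ' : J' ⊆ Finset.Icc 1 (m-1)) :
    Finset.Icc 1 (c + m - 1) \ insert c (J'.image (c + ·))
      = Finset.Icc 1 (c-1) ∪ (Finset.Icc 1 (m-1) \ J').image (c + ·) := by
  ext x
  simp only [Finset.mem_sdiff, Finset.mem_insert, Finset.mem_union, Finset.mem_image,
    Finset.mem_Icc, not_or, not_exists]
  constructor
  · rintro ⟨⟨h1, h2⟩, h3, h4⟩
    rcases Nat.lt_or_ge x c with h | h
    · left; omega
    · right
      refine ⟨x - c, ⟨⟨by omega, by omega⟩, fun hx => ?_⟩, by omega⟩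
      exact h4 (x - c) ⟨hx, by omega⟩
  · rintro (⟨h1, h2⟩ | ⟨y, ⟨⟨hy1, hy2⟩, hy3⟩, rfl⟩)
    · refine ⟨⟨h1, by omega⟩, by omega, fun y hy => ?_⟩
      obtain ⟨hy1, hy2⟩ := hy
      have := Finset.mem_Icc.mp (hJ' hy1)
      omega
    · refine ⟨⟨by omega, by omega⟩, by omega, fun z hz => ?_⟩
      obtain ⟨hz1, hz2⟩ := hz
      have : z = y := by omega
      exact hy3 (this ▸ hz1)

lemma sdiff_insert_shift0 {b m : ℕ} (hm : 1 ≤ m) (J' : Finset ℕ)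
    (hJ' : J' ⊆ Finset.Icc 1 (m-1)) :
    Finset.Icc 0 (b + m - 1) \ insert b (J'.image (b + ·))
      = Finset.range b ∪ (Finset.Icc 1 (m-1) \ J').image (b + ·) := by
  ext x
  simp only [Finset.mem_sdiff, Finset.mem_insert, Finset.mem_union, Finset.mem_image,
    Finset.mem_Icc, Finset.mem_range, not_or, not_exists]
  constructor
  · rintro ⟨⟨h1, h2⟩, h3, h4⟩
    rcases Nat.lt_or_ge x b with h | h
    · left; omega
    · right
      refine ⟨x - b, ⟨⟨by omega, by omega⟩, fun hx => ?_⟩, by omega⟩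
      exact h4 (x - b) ⟨hx, by omega⟩
  · rintro (h | ⟨y, ⟨⟨hy1, hy2⟩, hy3⟩, rfl⟩)
    · refine ⟨⟨by omega, by omega⟩, by omega, fun y hy => ?_⟩
      obtain ⟨hy1, hy2⟩ := hy
      have := Finset.mem_Icc.mp (hJ' hy1)
      omega
    · refine ⟨⟨by omega, by omega⟩, by omega, fun z hz => ?_⟩
      obtain ⟨hz1, hz2⟩ := hz
      have : z = y := by omega
      exact hy3 (this ▸ hz1)

lemma mkF2_union {t : List ℕ} (ht : t ≠ []) (hodd : ∀ a ∈ t, Odd a) :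
    mkF2 t ∪ (mkF2 t).image (· - 1) = Finset.Icc 1 (t.sum - 1) \ partialSums t := by
  induction t with
  | nil => exact absurd rfl ht
  | cons c t' ih =>
    have hc : Odd c := hodd c (by simp)
    have hcodd : c % 2 = 1 := Nat.odd_iff.mp hc
    have hodd' : ∀ a ∈ t', Odd a := fun a ha => hodd a (List.mem_cons_of_mem _ ha)
    rcases eq_or_ne t' [] with rfl | ht'
    · simp only [mkF2, List.sum_cons, List.sum_nil, partialSums_singleton,
        Finset.image_empty, Finset.union_empty, Finset.sdiff_empty, Nat.add_zero]
      exact even_run c hcodd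
    · have hsum' : 1 ≤ t'.sum := odd_sum_pos ht' hodd'
      have hps' : partialSums t' ⊆ Finset.Icc 1 (t'.sum - 1) :=
        partialSums_subset t' (fun a ha => (hodd' a ha).pos)
      have hmem2 : ∀ x ∈ mkF2 t', 1 ≤ x := by
        intro x hx
        have := Finset.mem_Icc.mp (mkF2_subset hodd' hx)
        omega
      rw [show mkF2 (c :: t') = ((Finset.range c).filter fun i => i % 2 = 0 ∧ 2 ≤ i)
          ∪ (mkF2 t').image (c + ·) from rfl]
      rw [Finset.image_union, shift_sub_image _ hmem2 c]
      have hre : ∀ (P Q R S : Finset ℕ), (P ∪ Q) ∪ (R ∪ S) = (P ∪ R) ∪ (Q ∪ S) := by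
        intro P Q R S
        ext x
        simp only [Finset.mem_union]
        tauto
      rw [hre, even_run c hcodd, ← Finset.image_union, ih ht' hodd',
        partialSums_cons c t' ht', List.sum_cons]
      exact (sdiff_insert_shift hc.pos hsum' _ hps').symm

lemma mkF_union {n : ℕ} {l : List ℕ} (hn : 1 ≤ n) (hl : isAlmostOdd n l) :
    mkF l ∪ (mkF l).image (· - 1) = Finset.Icc 0 (n-1) \ partialSums l := by
  obtain ⟨hne, hhead, htail, hsum⟩ := hl
  obtain ⟨b, t, rfl⟩ := List.exists_cons_of_ne_nil hne
  simp only [List.headI] at hhead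
  simp only [List.tail_cons] at htail
  rw [List.sum_cons] at hsum
  have hbodd : b % 2 = 0 := Nat.even_iff.mp hhead
  rcases eq_or_ne t [] with rfl | ht
  · simp only [mkF, mkF2, partialSums_singleton, Finset.image_empty, Finset.union_empty,
      Finset.sdiff_empty]
    rw [odd_run b hbodd]
    simp only [List.sum_nil] at hsum
    rw [← hsum]
    ext x
    simp only [Finset.mem_range, Finset.mem_Icc]
    omega
  · have hsum' : 1 ≤ t.sum := odd_sum_pos ht htail
    have hps' : partialSums t ⊆ Finset.Icc 1 (t.sum - 1) :=
      partialSums_subset t (fun a ha => (htail a ha).pos)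
    have hmem2 : ∀ x ∈ mkF2 t, 1 ≤ x := by
      intro x hx
      have := Finset.mem_Icc.mp (mkF2_subset htail hx)
      omega
    rw [show mkF (b :: t) = ((Finset.range b).filter fun i => i % 2 = 1)
        ∪ (mkF2 t).image (b + ·) from rfl]
    rw [Finset.image_union, shift_sub_image _ hmem2 b]
    have hre : ∀ (P Q R S : Finset ℕ), (P ∪ Q) ∪ (R ∪ S) = (P ∪ R) ∪ (Q ∪ S) := by
      intro P Q R S
      ext x
      simp only [Finset.mem_union]
      tauto
    rw [hre, odd_run b hbodd, ← Finset.image_union, mkF2_union ht htail,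
      partialSums_cons b t ht, ← hsum]
    exact (sdiff_insert_shift0 hsum' _ hps').symm

lemma mkF_subset {n : ℕ} {l : List ℕ} (hn : 1 ≤ n) (hl : isAlmostOdd n l) :
    mkF l ⊆ Finset.Icc 1 (n-1) := by
  obtain ⟨hne, hhead, htail, hsum⟩ := hl
  obtain ⟨b, t, rfl⟩ := List.exists_cons_of_ne_nil hne
  simp only [List.tail_cons] at htail
  rw [List.sum_cons] at hsum
  intro x hx
  rw [show mkF (b :: t) = ((Finset.range b).filter fun i => i % 2 = 1)
      ∪ (mkF2 t).image (b + ·) from rfl, Finset.mem_union] at hx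
  rcases hx with hx | hx
  · rw [Finset.mem_filter, Finset.mem_range] at hx
    rw [Finset.mem_Icc]
    omega
  · rw [Finset.mem_image] at hx
    obtain ⟨y, hy, rfl⟩ := hx
    have := Finset.mem_Icc.mp (mkF2_subset htail hy)
    have hsum2 : 1 ≤ t.sum := by omega
    rw [Finset.mem_Icc]
    omega

lemma mkF_sparse {n : ℕ} {l : List ℕ} (hl : isAlmostOdd n l) :
    ∀ i ∈ mkF l, i + 1 ∉ mkF l := by
  obtain ⟨hne, hhead, htail, hsum⟩ := hl
  obtain ⟨b, t, rfl⟩ := List.exists_cons_of_ne_nil hne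
  simp only [List.tail_cons] at htail
  intro i hi hi1
  rw [show mkF (b :: t) = ((Finset.range b).filter fun i => i % 2 = 1)
      ∪ (mkF2 t).image (b + ·) from rfl, Finset.mem_union] at hi hi1
  rcases hi with hi | hi <;> rcases hi1 with hi1 | hi1
  · rw [Finset.mem_filter] at hi hi1
    omega
  · rw [Finset.mem_filter, Finset.mem_range] at hi
    rw [Finset.mem_image] at hi1
    obtain ⟨y, hy, hxy⟩ := hi1
    have := Finset.mem_Icc.mp (mkF2_subset htail hy)
    omega
  · rw [Finset.mem_image] at hi
    obtain ⟨y, hy, rfl⟩ := hi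
    rw [Finset.mem_filter, Finset.mem_range] at hi1
    have := Finset.mem_Icc.mp (mkF2_subset htail hy)
    omega
  · rw [Finset.mem_image] at hi hi1
    obtain ⟨y, hy, rfl⟩ := hi
    obtain ⟨z, hz, hz2⟩ := hi1
    have hyz : z = y + 1 := by omega
    exact mkF2_sparse htail y hy (hyz ▸ hz)

lemma unique_pseudo : ∀ (l1 l2 : List ℕ), l1 ≠ [] → l2 ≠ [] →
    (∀ a ∈ l1.tail, 0 < a) → (∀ a ∈ l2.tail, 0 < a) → l1.sum = l2.sum →
    partialSums l1 = partialSums l2 → l1 = l2 := by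
  intro l1
  induction l1 with
  | nil => intro l2 h; exact absurd rfl h
  | cons b1 t1 ih =>
    rintro l2 - h2 hp1 hp2 hsum hps
    obtain ⟨b2, t2, rfl⟩ := List.exists_cons_of_ne_nil h2
    simp only [List.tail_cons] at hp1 hp2
    rw [List.sum_cons, List.sum_cons] at hsum
    rcases eq_or_ne t1 [] with rfl | ht1 <;> rcases eq_or_ne t2 [] with rfl | ht2
    · simp only [List.sum_nil] at hsum
      have : b1 = b2 := by omega
      rw [this]
    · exfalso
      rw [partialSums_singleton, partialSums_cons b2 t2 ht2] at hps
      have : b2 ∈ (∅ : Finset ℕ) := hps ▸ Finset.mem_insert_self b2 _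
      simp at this
    · exfalso
      rw [partialSums_singleton, partialSums_cons b1 t1 ht1] at hps
      have : b1 ∈ (∅ : Finset ℕ) := hps ▸ Finset.mem_insert_self b1 _
      simp at this
    · rw [partialSums_cons b1 t1 ht1, partialSums_cons b2 t2 ht2] at hps
      have hb1 : b1 ∈ insert b2 ((partialSums t2).image (b2 + ·)) :=
        hps ▸ Finset.mem_insert_self b1 _
      have hb2 : b2 ∈ insert b1 ((partialSums t1).image (b1 + ·)) :=
        hps.symm ▸ Finset.mem_insert_self b2 _
      have hbb : b1 = b2 := by
        rcases Finset.mem_insert.mp hb1 with h | h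
        · exact h
        · rcases Finset.mem_insert.mp hb2 with h' | h'
          · exact h'.symm
          · obtain ⟨y, _, hy⟩ := Finset.mem_image.mp h
            obtain ⟨z, _, hz⟩ := Finset.mem_image.mp h'
            omega
      subst hbb
      have h01 : 0 ∉ partialSums t1 := zero_not_mem_partialSums t1 hp1
      have h02 : 0 ∉ partialSums t2 := zero_not_mem_partialSums t2 hp2
      have hnotin1 : b1 ∉ (partialSums t1).image (b1 + ·) := by
        intro h
        obtain ⟨y, hy, hy2⟩ := Finset.mem_image.mp h
        have : y = 0 := by omega
        exact h01 (this ▸ hy)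
      have hnotin2 : b1 ∉ (partialSums t2).image (b1 + ·) := by
        intro h
        obtain ⟨y, hy, hy2⟩ := Finset.mem_image.mp h
        have : y = 0 := by omega
        exact h02 (this ▸ hy)
      have himg : (partialSums t1).image (b1 + ·) = (partialSums t2).image (b1 + ·) := by
        ext x
        constructor
        · intro hx
          have : x ∈ insert b1 ((partialSums t2).image (b1 + ·)) := hps ▸
            Finset.mem_insert_of_mem hx
          rcases Finset.mem_insert.mp this with rfl | h
          · exact absurd hx hnotin1
          · exact h
        · intro hx
          have : x ∈ insert b1 ((partialSums t1).image (b1 + ·)) := hps.symm ▸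
            Finset.mem_insert_of_mem hx
          rcases Finset.mem_insert.mp this with rfl | h
          · exact absurd hx hnotin2
          · exact h
      have hpst : partialSums t1 = partialSums t2 := by
        ext x
        constructor
        · intro hx
          have : b1 + x ∈ (partialSums t2).image (b1 + ·) := himg ▸
            Finset.mem_image_of_mem _ hx
          obtain ⟨y, hy, hy2⟩ := Finset.mem_image.mp this
          have : y = x := by omega
          exact this ▸ hy
        · intro hx
          have : b1 + x ∈ (partialSums t1).image (b1 + ·) := himg.symm ▸
            Finset.mem_image_of_mem _ hx
          obtain ⟨y, hy, hy2⟩ := Finset.mem_image.mp this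
          have : y = x := by omega
          exact this ▸ hy
      have := ih t2 ht1 ht2 (fun a ha => hp1 a (List.mem_of_mem_tail ha))
        (fun a ha => hp2 a (List.mem_of_mem_tail ha)) (by omega) hpst
      rw [this]

lemma U_compl {n : ℕ} {F : Finset ℕ} (hn : 1 ≤ n) (hsub : F ⊆ Finset.Icc 1 (n-1)) :
    Finset.Icc 0 (n-1) \ (Finset.Icc 0 (n-1) \ (F ∪ F.image (· - 1)))
      = F ∪ F.image (· - 1) := by
  rw [Finset.sdiff_sdiff_self_left]
  apply Finset.inter_eq_right.mpr
  intro x hx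
  have := U_subset_range hn hsub hx
  rw [Finset.mem_range] at this
  rw [Finset.mem_Icc]
  omega

lemma partialSums_almostOdd_subset {n : ℕ} {l : List ℕ} (hl : isAlmostOdd n l) :
    partialSums l ⊆ Finset.Icc 0 (n-1) := by
  obtain ⟨hne, hhead, htail, hsum⟩ := hl
  intro x hx
  simp only [partialSums, Finset.mem_image, Finset.mem_Icc] at hx
  obtain ⟨i, ⟨h1, h2⟩, rfl⟩ := hx
  obtain ⟨b, t, rfl⟩ := List.exists_cons_of_ne_nil hne
  simp only [List.length_cons] at h2
  simp only [List.tail_cons] at htail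
  rw [List.sum_cons] at hsum
  have htd := List.sum_take_add_sum_drop (b :: t) i
  obtain ⟨j, rfl⟩ : ∃ j, i = j + 1 := ⟨i - 1, by omega⟩
  have hdrop_eq : (b :: t).drop (j+1) = t.drop j := by
    simp [List.drop_succ_cons]
  have hdropne : t.drop j ≠ [] := by
    intro h
    have : (t.drop j).length = t.length - j := List.length_drop
    rw [h] at this
    simp at this
    omega
  have hdroppos : 1 ≤ (t.drop j).sum :=
    List.sum_pos _ (fun x hx => (htail x (List.mem_of_mem_drop hx)).pos) hdropne
  rw [hdrop_eq] at htd
  rw [List.sum_cons] at htd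
  have htd2 := List.sum_take_add_sum_drop t j
  rw [Finset.mem_Icc]
  omega

/-- The map F ↦ γ_F, characterized by J(γ_F) = [0,n-1] \ (F ∪ (F-1)), is a
bijection between sparse subsets of [n-1] and almost-odd compositions of n. -/
theorem stmt7 (n : ℕ) (hn : 1 ≤ n) :
    ∃ e : {F : Finset ℕ // F ∈ sparseSets n} ≃ {l : List ℕ // isAlmostOdd n l},
      ∀ F, partialSums (e F).1
        = Finset.Icc 0 (n - 1) \ (F.1 ∪ F.1.image (· - 1)) := by
  have hspec : ∀ F : {F : Finset ℕ // F ∈ sparseSets n}, isAlmostOdd n (gList n F.1) ∧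
      partialSums (gList n F.1) = Finset.Icc 0 (n-1) \ (F.1 ∪ F.1.image (· - 1)) :=
    fun F => gList_spec hn (mem_sparse_iff.mp F.2).1 (mem_sparse_iff.mp F.2).2
  set φ : {F : Finset ℕ // F ∈ sparseSets n} → {l : List ℕ // isAlmostOdd n l} :=
    fun F => ⟨gList n F.1, (hspec F).1⟩ with hφ
  have hbij : Function.Bijective φ := by
    constructor
    · rintro ⟨F1, hF1⟩ ⟨F2, hF2⟩ h
      have hg : gList n F1 = gList n F2 := congrArg Subtype.val h
      have hps : partialSums (gList n F1) = partialSums (gList n F2) := by rw [hg]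
      rw [(hspec ⟨F1, hF1⟩).2, (hspec ⟨F2, hF2⟩).2] at hps
      have hU : F1 ∪ F1.image (· - 1) = F2 ∪ F2.image (· - 1) := by
        rw [← U_compl hn (mem_sparse_iff.mp hF1).1, ← U_compl hn (mem_sparse_iff.mp hF2).1,
          hps]
      apply Subtype.ext
      ext i
      rw [recover (mem_sparse_iff.mp hF1).1 (mem_sparse_iff.mp hF1).2 i,
        recover (mem_sparse_iff.mp hF2).1 (mem_sparse_iff.mp hF2).2 i, hU]
    · rintro ⟨l, hl⟩
      have hFmem : mkF l ∈ sparseSets n :=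
        mem_sparse_iff.mpr ⟨mkF_subset hn hl, mkF_sparse hl⟩
      refine ⟨⟨mkF l, hFmem⟩, ?_⟩
      apply Subtype.ext
      have hspec' := hspec ⟨mkF l, hFmem⟩
      have hJ : partialSums (gList n (mkF l)) = partialSums l := by
        rw [hspec'.2]
        simp only
        rw [mkF_union hn hl, Finset.sdiff_sdiff_self_left]
        exact Finset.inter_eq_right.mpr (partialSums_almostOdd_subset hl)
      exact unique_pseudo _ _ hspec'.1.1 hl.1
        (fun a ha => (hspec'.1.2.2.1 a ha).pos)
        (fun a ha => (hl.2.2.1 a ha).pos)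
        (by rw [hspec'.1.2.2.2, hl.2.2.2]) hJ
  refine ⟨Equiv.ofBijective φ hbij, ?_⟩
  intro F
  exact (hspec F).2
end

section
/- For sparse subsets F, G of [n-1]: F ⪯ G (i.e., G ⊆ F̄ where F̄ = F ∪ ((F-1)∩(F+1))) if and only if G ∪ (G-1) ⊆ F ∪ (F-1), if and only if γ_G refines γ_F (equivalently J(γ_F) ⊆ J(γ_G)). -/
/-- For sparse subsets F, G of [n-1]: F ⪯ G (i.e. G ⊆ F̄) iff
G ∪ (G-1) ⊆ F ∪ (F-1), iff γ_G refines γ_F (i.e. J(γ_F) ⊆ J(γ_G)), where γ_F is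
the pseudocomposition with J(γ_F) = [0,n-1] \ (F ∪ (F-1)). -/
theorem stmt8 (n : ℕ) (hn : 1 ≤ n) (F G : Finset ℕ)
    (hF : F ∈ sparseSets n) (hG : G ∈ sparseSets n)
    (lF lG : List ℕ) (hlF : isPseudo n lF) (hlG : isPseudo n lG)
    (hJF : partialSums lF = Finset.Icc 0 (n - 1) \ (F ∪ F.image (· - 1)))
    (hJG : partialSums lG = Finset.Icc 0 (n - 1) \ (G ∪ G.image (· - 1))) :
    (G ⊆ barFinset F ↔ G ∪ G.image (· - 1) ⊆ F ∪ F.image (· - 1)) ∧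
    (G ⊆ barFinset F ↔ partialSums lF ⊆ partialSums lG) := by
  obtain ⟨hFsub, -⟩ := Finset.mem_filter.mp hF
  rw [Finset.mem_powerset] at hFsub
  obtain ⟨hGsub, -⟩ := Finset.mem_filter.mp hG
  rw [Finset.mem_powerset] at hGsub
  have key : G ⊆ barFinset F ↔ G ∪ G.image (· - 1) ⊆ F ∪ F.image (· - 1) := by
    constructor
    · intro h x hx
      rcases Finset.mem_union.mp hx with hxG | hxG
      · rcases Finset.mem_union.mp (h hxG) with hf | hf
        · exact Finset.mem_union_left _ hf
        · exact Finset.mem_union_right _ (Finset.mem_of_mem_inter_left hf)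
      · obtain ⟨g, hg, hgx⟩ := Finset.mem_image.mp hxG
        have hgx' : g - 1 = x := hgx
        rcases Finset.mem_union.mp (h hg) with hf | hf
        · exact Finset.mem_union_right _
            (Finset.mem_image.mpr ⟨g, hf, hgx⟩)
        · obtain ⟨f, hfF, hfg⟩ := Finset.mem_image.mp (Finset.mem_of_mem_inter_right hf)
          have hfg' : f + 1 = g := hfg
          have : f = x := by omega
          subst this
          exact Finset.mem_union_left _ hfF
    · intro h g hg
      have hg1 : 1 ≤ g := (Finset.mem_Icc.mp (hGsub hg)).1
      rcases Finset.mem_union.mp (h (Finset.mem_union_left _ hg)) with hf | hf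
      · exact Finset.mem_union_left _ hf
      · obtain ⟨f, hfF, hfg⟩ := Finset.mem_image.mp hf
        have hfg' : f - 1 = g := hfg
        have hf1 : 1 ≤ f := (Finset.mem_Icc.mp (hFsub hfF)).1
        have : f = g + 1 := by omega
        subst this
        have hgm : g - 1 ∈ F ∪ F.image (· - 1) :=
          h (Finset.mem_union_right _ (Finset.mem_image_of_mem _ hg))
        rcases Finset.mem_union.mp hgm with hf' | hf'
        · refine Finset.mem_union_right _ (Finset.mem_inter.mpr ⟨?_, ?_⟩)
          · exact Finset.mem_image.mpr ⟨g + 1, hfF, by omega⟩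
          · exact Finset.mem_image.mpr ⟨g - 1, hf', by omega⟩
        · obtain ⟨f', hf'F, hff⟩ := Finset.mem_image.mp hf'
          have hff' : f' - 1 = g - 1 := hff
          have hf'1 : 1 ≤ f' := (Finset.mem_Icc.mp (hFsub hf'F)).1
          have : f' = g := by omega
          subst this
          exact Finset.mem_union_left _ hf'F
  have hsubG : G ∪ G.image (· - 1) ⊆ Finset.Icc 0 (n - 1) := by
    intro x hx
    rcases Finset.mem_union.mp hx with h | h
    · have := Finset.mem_Icc.mp (hGsub h)
      exact Finset.mem_Icc.mpr ⟨by omega, this.2⟩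
    · obtain ⟨f, hfF, hfx⟩ := Finset.mem_image.mp h
      have hfx' : f - 1 = x := hfx
      have := Finset.mem_Icc.mp (hGsub hfF)
      exact Finset.mem_Icc.mpr ⟨by omega, by omega⟩
  refine ⟨key, key.trans ?_⟩
  rw [hJF, hJG]
  constructor
  · intro h x hx
    obtain ⟨hxI, hxF⟩ := Finset.mem_sdiff.mp hx
    exact Finset.mem_sdiff.mpr ⟨hxI, fun hg => hxF (h hg)⟩
  · intro h x hx
    by_contra hxF
    have hxI : x ∈ Finset.Icc 0 (n - 1) := hsubG hx
    have := h (Finset.mem_sdiff.mpr ⟨hxI, hxF⟩)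
    exact (Finset.mem_sdiff.mp this).2 hx
end

section
/- Let G be a sparse subset of [n-1] and β a pseudocomposition of n with J = J(β). Then G ⊆ [n-1] \ (J ∪ (J+1)) if and only if β ≤ γ_G in refinement order (J(β) ⊆ J(γ_G)). -/
lemma partialSums_le {n : ℕ} {l : List ℕ} (h : isPseudo n l) :
    partialSums l ⊆ Finset.Icc 0 (n - 1) := by
  obtain ⟨hne, htail, hsum⟩ := h
  intro x hx
  simp only [partialSums, Finset.mem_image, Finset.mem_Icc] at hx
  obtain ⟨i, ⟨hi1, hi2⟩, rfl⟩ := hx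
  have hlen : 1 ≤ l.length := List.length_pos_iff.mpr hne
  have hi : i < l.length := by omega
  have hdrop : l.drop i ≠ [] := by
    simp [List.drop_eq_nil_iff]; omega
  obtain ⟨a, rest, hd⟩ := List.exists_cons_of_ne_nil hdrop
  have ha : a ∈ l.drop i := by rw [hd]; exact List.mem_cons_self
  have ha' : a ∈ l.tail := by
    have : l.drop i = l.tail.drop (i - 1) := by
      rw [← List.drop_one, List.drop_drop]
      congr 1
      omega
    rw [this] at ha
    exact List.mem_of_mem_drop ha
  have h1 : 1 ≤ a := htail a ha'
  have h2 : (l.take i).sum + (l.drop i).sum = n := by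
    rw [List.sum_take_add_sum_drop, hsum]
  have h3 : a ≤ (l.drop i).sum := by
    rw [hd]; simp
  simp only [Finset.mem_Icc]
  omega

/-- Let G be a sparse subset of [n-1] and β a pseudocomposition of n with
J = J(β). Then G ⊆ [n-1] \ (J ∪ (J+1)) iff β ≤ γ_G in refinement order,
i.e. J(β) ⊆ J(γ_G), where J(γ_G) = [0,n-1] \ (G ∪ (G-1)). -/
theorem stmt9 (n : ℕ) (hn : 1 ≤ n) (G : Finset ℕ) (hG : G ∈ sparseSets n)
    (lβ lG : List ℕ) (hβ : isPseudo n lβ) (hlG : isPseudo n lG)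
    (hJG : partialSums lG = Finset.Icc 0 (n - 1) \ (G ∪ G.image (· - 1))) :
    G ⊆ Finset.Icc 1 (n - 1) \ (partialSums lβ ∪ (partialSums lβ).image (· + 1))
      ↔ partialSums lβ ⊆ partialSums lG := by
  have hGsub : G ⊆ Finset.Icc 1 (n - 1) :=
    Finset.mem_powerset.mp (Finset.mem_filter.mp hG).1
  have hJsub : partialSums lβ ⊆ Finset.Icc 0 (n - 1) := partialSums_le hβ
  rw [hJG]
  constructor
  · intro h j hj
    have hj' : j ≤ n - 1 := by
      have := hJsub hj; simp only [Finset.mem_Icc] at this; omega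
    simp only [Finset.mem_sdiff, Finset.mem_union, Finset.mem_image, Finset.mem_Icc]
    push_neg
    refine ⟨⟨Nat.zero_le _, hj'⟩, ?_, ?_⟩
    · intro hjG
      have := h hjG
      simp only [Finset.mem_sdiff, Finset.mem_union, Finset.mem_image] at this
      push_neg at this
      exact this.2.1 hj
    · intro g hg hgj
      have hg1 : 1 ≤ g := by
        have := hGsub hg; simp only [Finset.mem_Icc] at this; omega
      have := h hg
      simp only [Finset.mem_sdiff, Finset.mem_union, Finset.mem_image] at this
      push_neg at this
      exact this.2.2 j hj (by omega)
  · intro h g hg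
    have hg' : 1 ≤ g ∧ g ≤ n - 1 := by
      have := hGsub hg; simpa using this
    simp only [Finset.mem_sdiff, Finset.mem_union, Finset.mem_image, Finset.mem_Icc]
    push_neg
    refine ⟨hg', ?_, ?_⟩
    · intro hgJ
      have := h hgJ
      simp only [Finset.mem_sdiff, Finset.mem_union, Finset.mem_image] at this
      push_neg at this
      exact absurd hg this.2.1
    · intro j hj hjg
      have := h hj
      simp only [Finset.mem_sdiff, Finset.mem_union, Finset.mem_image] at this
      push_neg at this
      exact this.2.2 g hg (by omega)
end

section
/- The map γ ↦ τ_γ sending an almost-odd composition γ = (b_0, b_1, ..., b_k) of n to the thin composition consisting of b_0/2 twos, then 1 followed by (b_1-1)/2 twos, then 1 followed by (b_2-1)/2 twos, ..., then 1 followed by (b_k-1)/2 twos, is a bijection between almost-odd compositions of n and thin compositions of n, satisfying k(τ_γ) = (n + k(γ))/2 (where k(τ_γ) is the total number of parts of τ_γ and k(γ) = k). -/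
/-- τ_γ: replace the first part b_0 by b_0/2 twos, and each subsequent part b_i
by a 1 followed by (b_i - 1)/2 twos. -/
def tauOf (l : List ℕ) : List ℕ :=
  List.replicate (l.headI / 2) 2
    ++ l.tail.flatMap fun b => 1 :: List.replicate ((b - 1) / 2) 2

/-- Inverse of τ. -/
def invTau : List ℕ → List ℕ
  | [] => [0]
  | a :: t =>
      let r := invTau t
      if a = 1 then 0 :: (r.headI + 1) :: r.tail else (r.headI + a) :: r.tail

lemma invTau_ne_nil (t : List ℕ) : invTau t ≠ [] := by
  cases t with
  | nil => simp [invTau]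
  | cons a t => simp only [invTau]; split <;> simp

lemma invTau_cons_eq (t : List ℕ) :
    invTau t = (invTau t).headI :: (invTau t).tail := by
  cases h : invTau t with
  | nil => exact absurd h (invTau_ne_nil t)
  | cons b r => simp

lemma invTau_replicate (m : ℕ) (s : List ℕ) :
    invTau (List.replicate m 2 ++ s) = ((invTau s).headI + 2 * m) :: (invTau s).tail := by
  induction m with
  | zero => simpa using invTau_cons_eq s
  | succ m ih =>
      rw [List.replicate_succ, List.cons_append]
      simp only [invTau, ih]
      norm_num
      ring_nf

lemma invTau_flatMap (r : List ℕ) (hr : ∀ a ∈ r, Odd a) :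
    invTau (r.flatMap fun b => 1 :: List.replicate ((b - 1) / 2) 2) = 0 :: r := by
  induction r with
  | nil => simp [invTau]
  | cons b r ih =>
      obtain ⟨c, hc⟩ := hr b (by simp)
      have ih' := ih (fun a ha => hr a (by simp [ha]))
      rw [List.flatMap_cons, List.cons_append]
      simp only [invTau, invTau_replicate, ih', if_pos rfl]
      simp
      omega

lemma invTau_tauOf (l : List ℕ) (h0 : Even l.headI) (ht : ∀ a ∈ l.tail, Odd a)
    (hne : l ≠ []) : invTau (tauOf l) = l := by
  obtain ⟨b0, rest, rfl⟩ : ∃ b0 rest, l = b0 :: rest := by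
    cases l with
    | nil => exact absurd rfl hne
    | cons a t => exact ⟨a, t, rfl⟩
  simp only [tauOf, List.headI_cons, List.tail_cons] at *
  rw [invTau_replicate, invTau_flatMap rest ht]
  obtain ⟨c, hc⟩ := h0
  simp
  omega

lemma tauOf_invTau (t : List ℕ) (ht : ∀ a ∈ t, a = 1 ∨ a = 2) :
    tauOf (invTau t) = t := by
  induction t with
  | nil => simp [invTau, tauOf]
  | cons a t ih =>
      have ih' := ih (fun x hx => ht x (by simp [hx]))
      have key : List.replicate ((invTau t).headI / 2) 2
          ++ (invTau t).tail.flatMap (fun b => 1 :: List.replicate ((b - 1) / 2) 2)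
          = t := ih'
      rcases ht a (by simp) with rfl | rfl
      · simp only [invTau, if_pos rfl, tauOf, List.headI_cons, List.tail_cons,
          List.flatMap_cons, Nat.zero_div, List.replicate_zero, List.nil_append,
          Nat.add_sub_cancel, List.cons_append, if_true, eq_self_iff_true, key]
      · have h2 : invTau (2 :: t) = ((invTau t).headI + 2) :: (invTau t).tail := by
          simp [invTau]
        rw [h2]
        simp only [tauOf, List.headI_cons, List.tail_cons]
        have hdiv : ((invTau t).headI + 2) / 2 = (invTau t).headI / 2 + 1 := by omega
        rw [hdiv, List.replicate_succ, List.cons_append, key]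

lemma invTau_sum (t : List ℕ) : (invTau t).sum = t.sum := by
  induction t with
  | nil => simp [invTau]
  | cons a t ih =>
      have h : (invTau t).headI + (invTau t).tail.sum = t.sum := by
        rw [← List.sum_cons, ← invTau_cons_eq]; exact ih
      simp only [invTau]
      split <;> simp <;> omega

lemma invTau_thin (t : List ℕ) (ht : ∀ a ∈ t, a = 1 ∨ a = 2) :
    Even (invTau t).headI ∧ ∀ a ∈ (invTau t).tail, Odd a := by
  induction t with
  | nil => simp [invTau]
  | cons a t ih =>
      obtain ⟨he, ho⟩ := ih (fun x hx => ht x (by simp [hx]))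
      rcases ht a (by simp) with rfl | rfl
      · simp only [invTau, if_pos rfl]
        refine ⟨by simp, ?_⟩
        intro x hx
        simp at hx
        rcases hx with rfl | hx
        · exact he.add_one
        · exact ho x hx
      · simp only [invTau]
        norm_num
        exact ⟨by exact he.add (even_two), ho⟩

lemma flatMap_sum (r : List ℕ) (hr : ∀ a ∈ r, Odd a) :
    (r.flatMap fun b => 1 :: List.replicate ((b - 1) / 2) 2).sum = r.sum := by
  induction r with
  | nil => simp
  | cons b r ih =>
      obtain ⟨c, hc⟩ := hr b (by simp)
      rw [List.flatMap_cons, List.sum_append, ih (fun a ha => hr a (by simp [ha]))]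
      simp [List.sum_replicate]
      omega

lemma flatMap_length (r : List ℕ) (hr : ∀ a ∈ r, Odd a) :
    2 * (r.flatMap fun b => 1 :: List.replicate ((b - 1) / 2) 2).length
      = r.sum + r.length := by
  induction r with
  | nil => simp
  | cons b r ih =>
      obtain ⟨c, hc⟩ := hr b (by simp)
      have ih' := ih (fun a ha => hr a (by simp [ha]))
      rw [List.flatMap_cons, List.length_append]
      simp only [List.length_cons, List.length_replicate, List.sum_cons]
      omega

lemma headI_add_tail_sum (l : List ℕ) (h : l ≠ []) :
    l.headI + l.tail.sum = l.sum := by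
  cases l with
  | nil => exact absurd rfl h
  | cons a t => simp

lemma tauOf_sum (l : List ℕ) (h0 : Even l.headI) (ht : ∀ a ∈ l.tail, Odd a) :
    (tauOf l).sum = l.headI + l.tail.sum := by
  obtain ⟨c, hc⟩ := h0
  simp [tauOf, List.sum_replicate, flatMap_sum l.tail ht]
  omega

lemma tauOf_thin (l : List ℕ) : ∀ a ∈ tauOf l, a = 1 ∨ a = 2 := by
  intro a ha
  simp [tauOf, List.mem_append, List.mem_flatMap, List.mem_replicate] at ha
  rcases ha with ⟨_, rfl⟩ | ⟨b, _, h⟩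
  · right; rfl
  · rcases h with rfl | ⟨_, rfl⟩
    · left; rfl
    · right; rfl

lemma tauOf_length (l : List ℕ) (h0 : Even l.headI) (ht : ∀ a ∈ l.tail, Odd a)
    (hne : l ≠ []) :
    2 * (tauOf l).length = l.sum + (l.length - 1) := by
  obtain ⟨b0, rest, rfl⟩ : ∃ b0 rest, l = b0 :: rest := by
    cases l with
    | nil => exact absurd rfl hne
    | cons a t => exact ⟨a, t, rfl⟩
  simp only [List.headI_cons, List.tail_cons] at *
  obtain ⟨c, hc⟩ := h0
  have := flatMap_length rest ht
  rw [tauOf]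
  simp only [List.headI_cons, List.tail_cons, List.length_append,
    List.length_replicate, List.sum_cons, List.length_cons]
  omega

/-- γ ↦ τ_γ is a bijection between almost-odd compositions of n and thin
compositions of n, with k(τ_γ) = (n + k(γ))/2, i.e.
2·(number of parts of τ_γ) = n + k(γ). -/
theorem stmt10 (n : ℕ) :
    ∃ e : {l : List ℕ // isAlmostOdd n l}
        ≃ {l : List ℕ // l.sum = n ∧ ∀ a ∈ l, a = 1 ∨ a = 2},
      ∀ γ, (e γ).1 = tauOf γ.1 ∧
        2 * (e γ).1.length = n + (γ.1.length - 1) := by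
  refine ⟨{
    toFun := fun γ => ⟨tauOf γ.1, by
      obtain ⟨hne, h0, ht, hs⟩ := γ.2
      refine ⟨?_, tauOf_thin γ.1⟩
      rw [tauOf_sum γ.1 h0 ht, headI_add_tail_sum γ.1 hne, hs]⟩
    invFun := fun t => ⟨invTau t.1, by
      obtain ⟨hs, ht⟩ := t.2
      obtain ⟨he, ho⟩ := invTau_thin t.1 ht
      exact ⟨invTau_ne_nil t.1, he, ho, by rw [invTau_sum, hs]⟩⟩
    left_inv := fun γ => by
      obtain ⟨hne, h0, ht, hs⟩ := γ.2
      exact Subtype.ext (invTau_tauOf γ.1 h0 ht hne)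
    right_inv := fun t => by
      exact Subtype.ext (tauOf_invTau t.1 t.2.2) }, ?_⟩
  intro γ
  obtain ⟨hne, h0, ht, hs⟩ := γ.2
  refine ⟨rfl, ?_⟩
  show 2 * (tauOf γ.1).length = n + (γ.1.length - 1)
  rw [tauOf_length γ.1 h0 ht hne, hs]
end

section
/- The number of almost-odd compositions of n equals the Fibonacci number f_n (with f_0 = f_1 = 1, f_n = f_{n-1} + f_{n-2}). -/
lemma isAlmostOdd_cons {n a : ℕ} {t : List ℕ} :
    isAlmostOdd n (a :: t) ↔ Even a ∧ (∀ x ∈ t, Odd x) ∧ a + t.sum = n := by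
  simp [isAlmostOdd]

lemma ao_exists {n : ℕ} {l : List ℕ} (h : isAlmostOdd n l) :
    ∃ a t, l = a :: t ∧ Even a ∧ (∀ x ∈ t, Odd x) ∧ a + t.sum = n := by
  obtain ⟨hne, h1, h2, h3⟩ := h
  cases l with
  | nil => exact absurd rfl hne
  | cons a t => exact ⟨a, t, rfl, h1, by simpa using h2, by simpa using h3⟩

instance aoFinite (n : ℕ) : Finite {l : List ℕ // isAlmostOdd n l} := by
  have hinj : Function.Injective (fun x : {l : List ℕ // isAlmostOdd n l} =>
      (⟨(x.1.headI + 1) :: x.1.tail, by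
        intro i hi
        rcases List.mem_cons.1 hi with h | h
        · omega
        · exact (x.2.2.2.1 i h).pos, by
        obtain ⟨a, t, hl, _, _, hs⟩ := ao_exists x.2
        simp [hl]
        omega⟩ : Composition (n+1))) := by
    intro x y hxy
    obtain ⟨a, t, hx, _⟩ := ao_exists x.2
    obtain ⟨b, s, hy, _⟩ := ao_exists y.2
    have hb := congrArg Composition.blocks hxy
    simp only [hx, hy, List.headI_cons, List.tail_cons, List.cons.injEq] at hb
    exact Subtype.ext (by rw [hx, hy, hb.2]; congr 1; omega)
  exact Finite.of_injective _ hinj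

def aoEquiv (n : ℕ) :
    {l : List ℕ // isAlmostOdd (n+2) l} ≃
      ({l : List ℕ // isAlmostOdd (n+1) l} ⊕ {l : List ℕ // isAlmostOdd n l}) where
  toFun x :=
    if h0 : x.1.headI = 0 then
      Sum.inl ⟨(x.1.tail.headI - 1) :: x.1.tail.tail, by
        obtain ⟨a, t, hl, he, ht, hs⟩ := ao_exists x.2
        rw [hl] at h0 ⊢
        simp only [List.headI_cons] at h0
        subst h0
        cases t with
        | nil => simp at hs
        | cons b t' =>
          have hb : Odd b := ht b (by simp)
          simp only [List.tail_cons, List.headI_cons]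
          refine isAlmostOdd_cons.2 ⟨?_, ?_, ?_⟩
          · rcases hb with ⟨k, hk⟩
            exact ⟨k, by omega⟩
          · intro x hx
            exact ht x (by simp [hx])
          · simp at hs
            have := hb.pos
            omega⟩
    else
      Sum.inr ⟨(x.1.headI - 2) :: x.1.tail, by
        obtain ⟨a, t, hl, he, ht, hs⟩ := ao_exists x.2
        rw [hl] at h0 ⊢
        simp only [List.headI_cons] at h0
        simp only [List.headI_cons, List.tail_cons]
        refine isAlmostOdd_cons.2 ⟨?_, ht, ?_⟩
        · rcases he with ⟨k, hk⟩
          exact ⟨k - 1, by omega⟩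
        · rcases he with ⟨k, hk⟩
          omega⟩
  invFun x :=
    match x with
    | Sum.inl y => ⟨0 :: (y.1.headI + 1) :: y.1.tail, by
        obtain ⟨a, t, hl, he, ht, hs⟩ := ao_exists y.2
        rw [hl]
        simp only [List.headI_cons, List.tail_cons]
        refine isAlmostOdd_cons.2 ⟨Even.zero, ?_, ?_⟩
        · intro x hx
          rcases List.mem_cons.1 hx with h | h
          · subst h
            rcases he with ⟨k, hk⟩
            exact ⟨k, by omega⟩
          · exact ht x h
        · simp; omega⟩
    | Sum.inr y => ⟨(y.1.headI + 2) :: y.1.tail, by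
        obtain ⟨a, t, hl, he, ht, hs⟩ := ao_exists y.2
        rw [hl]
        simp only [List.headI_cons, List.tail_cons]
        refine isAlmostOdd_cons.2 ⟨?_, ht, ?_⟩
        · rcases he with ⟨k, hk⟩
          exact ⟨k + 1, by omega⟩
        · omega⟩
  left_inv x := by
    obtain ⟨a, t, hl, he, ht, hs⟩ := ao_exists x.2
    dsimp only
    by_cases h0 : x.1.headI = 0
    · rw [dif_pos h0]
      have ha : a = 0 := by rw [hl] at h0; simpa using h0
      subst ha
      cases t with
      | nil => simp at hs
      | cons b t' =>
        have hb : Odd b := ht b (by simp)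
        apply Subtype.ext
        simp only [hl, List.tail_cons, List.headI_cons]
        have := hb.pos
        congr 2
        omega
    · rw [dif_neg h0]
      have ha : a ≠ 0 := by rw [hl] at h0; simpa using h0
      have ha2 : 2 ≤ a := by
        rcases he with ⟨k, hk⟩; omega
      apply Subtype.ext
      simp only [hl, List.tail_cons, List.headI_cons]
      congr 1
      omega
  right_inv x := by
    rcases x with y | y
    · obtain ⟨a, t, hl, he, ht, hs⟩ := ao_exists y.2
      dsimp only
      rw [dif_pos (show (0 :: ((y.1).headI + 1) :: (y.1).tail).headI = 0 from rfl)]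
      congr 1
      apply Subtype.ext
      simp [hl]
    · obtain ⟨a, t, hl, he, ht, hs⟩ := ao_exists y.2
      dsimp only
      rw [dif_neg (by simp)]
      congr 1
      apply Subtype.ext
      simp [hl]

lemma ao_zero {l : List ℕ} : isAlmostOdd 0 l ↔ l = [0] := by
  constructor
  · intro h
    obtain ⟨a, t, hl, he, ht, hs⟩ := ao_exists h
    cases t with
    | nil => simp at hs; simp [hl, hs]
    | cons b t' =>
      have := (ht b (by simp)).pos
      simp at hs
      omega
  · rintro rfl
    exact isAlmostOdd_cons.2 ⟨Even.zero, by simp, by simp⟩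

lemma ao_one {l : List ℕ} : isAlmostOdd 1 l ↔ l = [0, 1] := by
  constructor
  · intro h
    obtain ⟨a, t, hl, he, ht, hs⟩ := ao_exists h
    have ha : a = 0 := by rcases he with ⟨k, hk⟩; omega
    subst ha
    cases t with
    | nil => simp at hs
    | cons b t' =>
      have hb := (ht b (by simp)).pos
      simp at hs
      have hb1 : b = 1 := by omega
      have ht'0 : t'.sum = 0 := by omega
      cases t' with
      | nil => simp [hl, hb1]
      | cons c t'' =>
        have := (ht c (by simp)).pos
        simp at ht'0
        omega
  · rintro rfl
    refine isAlmostOdd_cons.2 ⟨Even.zero, ?_, by simp⟩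
    intro x hx
    simp at hx
    simp [hx]

/-- The number of almost-odd compositions of n is the Fibonacci number f_n
(f_0 = f_1 = 1, f_n = f_{n-1} + f_{n-2}), i.e. Nat.fib (n+1). -/
theorem stmt11 (n : ℕ) :
    Nat.card {l : List ℕ // isAlmostOdd n l} = Nat.fib (n + 1) := by
  induction n using Nat.twoStepInduction with
  | zero =>
    have e : {l : List ℕ // isAlmostOdd 0 l} ≃ PUnit.{1} :=
      { toFun := fun _ => PUnit.unit
        invFun := fun _ => ⟨[0], ao_zero.2 rfl⟩
        left_inv := fun x => Subtype.ext (by rw [ao_zero.1 x.2])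
        right_inv := fun _ => rfl }
    rw [Nat.card_congr e]
    simp
  | one =>
    have e : {l : List ℕ // isAlmostOdd 1 l} ≃ PUnit.{1} :=
      { toFun := fun _ => PUnit.unit
        invFun := fun _ => ⟨[0, 1], ao_one.2 rfl⟩
        left_inv := fun x => Subtype.ext (by rw [ao_one.1 x.2])
        right_inv := fun _ => rfl }
    rw [Nat.card_congr e]
    simp
  | more n ih1 ih2 =>
    rw [Nat.card_congr (aoEquiv n), Nat.card_sum, ih1, ih2]
    show Nat.fib (n + 2) + Nat.fib (n + 1) = Nat.fib (n + 3)
    have h3 : Nat.fib (n + 3) = Nat.fib (n + 1) + Nat.fib (n + 2) :=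
      Nat.fib_add_two (n := n + 1)
    omega
end

section
/- For any subset M of [n-1], Σ_{G sparse, G ⊆ [n-1]\M} (-1)^{#G} Q_G = Σ_{H sparse, H ⊆ M} P_H, where Q_G = Σ_{H sparse, G ⊆ H} P_H. -/
open Finset

/-- σ(i) for i ∈ [1,n], with σ(0) = 0 convention. -/
def pval (n : ℕ) (σ : Equiv.Perm (Fin n)) (i : ℕ) : ℕ :=
  if h : 1 ≤ i ∧ i ≤ n then ((σ ⟨i - 1, by omega⟩ : Fin n) : ℕ) + 1 else 0

/-- Peak(σ) = {i ∈ [n-1] : σ(i-1) < σ(i) > σ(i+1)}, with σ(0) = 0. -/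
def peakSet (n : ℕ) (σ : Equiv.Perm (Fin n)) : Finset ℕ :=
  (Finset.Icc 1 (n - 1)).filter fun i =>
    pval n σ (i - 1) < pval n σ i ∧ pval n σ (i + 1) < pval n σ i

/-- P_H: the sum of all permutations with peak set H. -/
noncomputable def PElt (K : Type*) [Field K] (n : ℕ) (F : Finset ℕ) :
    MonoidAlgebra K (Equiv.Perm (Fin n)) :=
  ∑ σ ∈ Finset.univ.filter (fun σ => peakSet n σ = F), MonoidAlgebra.single σ 1

/-- Q_G = Σ_{G ⊆ H sparse} P_H. -/
noncomputable def QElt (K : Type*) [Field K] (n : ℕ) (F : Finset ℕ) :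
    MonoidAlgebra K (Equiv.Perm (Fin n)) :=
  ∑ G ∈ (sparseSets n).filter (fun G => F ⊆ G), PElt K n G

/-- For any M ⊆ [n-1]:
Σ_{G sparse, G ⊆ [n-1]\M} (-1)^{#G} Q_G = Σ_{H sparse, H ⊆ M} P_H. -/
theorem stmt13 (K : Type*) [Field K] (n : ℕ)
    (M : Finset ℕ) (hM : M ⊆ Finset.Icc 1 (n - 1)) :
    ∑ G ∈ (sparseSets n).filter (fun G => G ⊆ Finset.Icc 1 (n - 1) \ M),
        ((-1 : K) ^ G.card) • QElt K n G
      = ∑ H ∈ (sparseSets n).filter (fun H => H ⊆ M), PElt K n H := by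
  classical
  have hswap :
      ∑ G ∈ (sparseSets n).filter (fun G => G ⊆ Finset.Icc 1 (n - 1) \ M),
        ∑ H ∈ (sparseSets n).filter (fun H => G ⊆ H),
          ((-1 : K) ^ G.card) • PElt K n H
      = ∑ H ∈ sparseSets n,
          ∑ G ∈ (sparseSets n).filter
            (fun G => G ⊆ Finset.Icc 1 (n - 1) \ M ∧ G ⊆ H),
            ((-1 : K) ^ G.card) • PElt K n H := by
    apply Finset.sum_comm'
    intro G H
    simp only [mem_filter]
    tauto
  have hset : ∀ H ∈ sparseSets n,
      (sparseSets n).filter (fun G => G ⊆ Finset.Icc 1 (n - 1) \ M ∧ G ⊆ H)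
        = (H \ M).powerset := by
    intro H hH
    simp only [sparseSets, mem_filter, mem_powerset] at hH
    ext G
    simp only [sparseSets, mem_filter, mem_powerset, mem_powerset]
    constructor
    · rintro ⟨⟨hGI, hGs⟩, hGc, hGH⟩
      intro x hx
      have := hGc hx
      simp only [mem_sdiff] at this ⊢
      exact ⟨hGH hx, this.2⟩
    · intro hG
      have hGH : G ⊆ H := fun x hx => (mem_sdiff.1 (hG hx)).1
      refine ⟨⟨hGH.trans hH.1, fun i hi hi1 => hH.2 i (hGH hi) (hGH hi1)⟩, ?_, hGH⟩
      intro x hx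
      have hxm := mem_sdiff.1 (hG hx)
      exact mem_sdiff.2 ⟨hH.1 hxm.1, hxm.2⟩
  calc
    ∑ G ∈ (sparseSets n).filter (fun G => G ⊆ Finset.Icc 1 (n - 1) \ M),
        ((-1 : K) ^ G.card) • QElt K n G
      = ∑ G ∈ (sparseSets n).filter (fun G => G ⊆ Finset.Icc 1 (n - 1) \ M),
          ∑ H ∈ (sparseSets n).filter (fun H => G ⊆ H),
            ((-1 : K) ^ G.card) • PElt K n H := by
        simp [QElt, Finset.smul_sum]
    _ = ∑ H ∈ sparseSets n,
          ∑ G ∈ (sparseSets n).filter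
            (fun G => G ⊆ Finset.Icc 1 (n - 1) \ M ∧ G ⊆ H),
            ((-1 : K) ^ G.card) • PElt K n H := hswap
    _ = ∑ H ∈ sparseSets n,
          (∑ G ∈ (H \ M).powerset, (-1 : K) ^ G.card) • PElt K n H := by
        refine Finset.sum_congr rfl fun H hH => ?_
        rw [hset H hH, Finset.sum_smul]
    _ = ∑ H ∈ sparseSets n,
          (if H ⊆ M then (1 : K) else 0) • PElt K n H := by
        refine Finset.sum_congr rfl fun H hH => ?_
        congr 1
        have : (∑ G ∈ (H \ M).powerset, (-1 : K) ^ G.card)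
            = ((∑ G ∈ (H \ M).powerset, (-1 : ℤ) ^ G.card : ℤ) : K) := by
          push_cast; rfl
        rw [this, Finset.sum_powerset_neg_one_pow_card]
        by_cases h : H ⊆ M
        · simp [h, Finset.sdiff_eq_empty_iff_subset.2 h]
        · have hne : H \ M ≠ ∅ := fun he => h (Finset.sdiff_eq_empty_iff_subset.1 he)
          simp [h, hne]
    _ = ∑ H ∈ (sparseSets n).filter (fun H => H ⊆ M), PElt K n H := by
        rw [Finset.sum_filter]
        refine Finset.sum_congr rfl fun H hH => ?_
        split <;> simp
end

section
/- For each i with 1 ≤ i ≤ ⌊(n+1)/2⌋, the identity Σ_{j=i}^{n-i+1} (-1)^{j-i} (j-1)! (n-j)! / ((j-i)! (n-i-j+1)!) equals (2i-2)!! (n-1)!! / (2^{2i-2} (n-2i+1)!!) if n is odd, and equals 0 if n is even. -/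
open Finset

/-- Auxiliary alternating sum `A a m = Σ_{k=0}^m (-1)^k C(a+k,k) C(a+m-k, m-k)`. -/
def stmtA (a m : ℕ) : ℤ :=
  ∑ k ∈ range (m + 1), (-1 : ℤ) ^ k * (a + k).choose k * (a + (m - k)).choose (m - k)

/-- Auxiliary sum `B a m = Σ_{k=0}^m (-1)^k C(a+k,k) C(a+1+m-k, m-k)`. -/
def stmtB (a m : ℕ) : ℤ :=
  ∑ k ∈ range (m + 1), (-1 : ℤ) ^ k * (a + k).choose k * (a + 1 + (m - k)).choose (m - k)

lemma stmtA_zero_right (a : ℕ) : stmtA a 0 = 1 := by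
  simp [stmtA]

lemma stmtA_odd (a m : ℕ) (h : m % 2 = 1) : stmtA a m = 0 := by
  have key : stmtA a m = -stmtA a m := by
    conv_lhs => rw [stmtA, ← Finset.sum_range_reflect]
    rw [stmtA, ← Finset.sum_neg_distrib]
    apply Finset.sum_congr rfl
    intro k hk
    rw [Finset.mem_range] at hk
    have h1 : m + 1 - 1 - k = m - k := by omega
    have h2 : m - (m - k) = k := by omega
    have h3 : (-1 : ℤ) ^ (m - k) = -(-1 : ℤ) ^ k := by
      rcases Nat.even_or_odd k with he | ho
      · have hodd : Odd (m - k) := by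
          rcases he with ⟨t, ht⟩; exact ⟨(m - k - 1) / 2, by omega⟩
        rw [hodd.neg_one_pow, he.neg_one_pow]
      · have heven : Even (m - k) := by
          rcases ho with ⟨t, ht⟩; exact ⟨(m - k) / 2, by omega⟩
        rw [heven.neg_one_pow, ho.neg_one_pow]; norm_num
    rw [h1, h2, h3]
    ring
  omega

lemma stmtL1 (a m : ℕ) :
    stmtA (a + 1) (m + 1) + stmtA (a + 1) m = stmtB a (m + 1) := by
  unfold stmtA stmtB
  rw [Finset.sum_range_succ' _ (m + 1), Finset.sum_range_succ' _ (m + 1)]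
  have hterm : ∀ k ∈ range (m + 1),
      (-1 : ℤ) ^ (k + 1) * ((a + (k + 1)).choose (k + 1) : ℤ) *
        ((a + 1 + (m + 1 - (k + 1))).choose (m + 1 - (k + 1)) : ℤ)
      = (-1 : ℤ) ^ (k + 1) * ((a + 1 + (k + 1)).choose (k + 1) : ℤ) *
          ((a + 1 + (m + 1 - (k + 1))).choose (m + 1 - (k + 1)) : ℤ)
        + (-1 : ℤ) ^ k * ((a + 1 + k).choose k : ℤ) *
          ((a + 1 + (m - k)).choose (m - k) : ℤ) := by
    intro k hk
    rw [Finset.mem_range] at hk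
    have h1 : m + 1 - (k + 1) = m - k := by omega
    have h2 : a + 1 + (k + 1) = (a + k + 1) + 1 := by omega
    rw [h1, h2, Nat.choose_succ_succ]
    have h3 : a + k + 1 = a + 1 + k := by omega
    have h4 : a + (k + 1) = a + k + 1 := by omega
    rw [h4]
    push_cast
    rw [h3]
    ring
  rw [Finset.sum_congr rfl hterm, Finset.sum_add_distrib]
  simp
  ring

lemma stmtL3 (a m : ℕ) : stmtB a (m + 1) = stmtA a (m + 1) + stmtB a m := by
  unfold stmtA stmtB
  rw [Finset.sum_range_succ _ (m + 1), Finset.sum_range_succ _ (m + 1)]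
  have hterm : ∀ k ∈ range (m + 1),
      (-1 : ℤ) ^ k * ((a + k).choose k : ℤ) *
        ((a + 1 + (m + 1 - k)).choose (m + 1 - k) : ℤ)
      = (-1 : ℤ) ^ k * ((a + k).choose k : ℤ) *
          ((a + (m + 1 - k)).choose (m + 1 - k) : ℤ)
        + (-1 : ℤ) ^ k * ((a + k).choose k : ℤ) *
          ((a + 1 + (m - k)).choose (m - k) : ℤ) := by
    intro k hk
    rw [Finset.mem_range] at hk
    have h1 : m + 1 - k = (m - k) + 1 := by omega
    have h2 : a + 1 + ((m - k) + 1) = (a + (m - k) + 1) + 1 := by omega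
    rw [h1, h2, Nat.choose_succ_succ]
    have h3 : a + (m - k) + 1 = a + 1 + (m - k) := by omega
    have h4 : a + ((m - k) + 1) = a + (m - k) + 1 := by omega
    rw [h4]
    push_cast
    rw [h3]
    ring
  rw [Finset.sum_congr rfl hterm, Finset.sum_add_distrib]
  simp
  ring

lemma stmtA_rec (a r : ℕ) :
    stmtA (a + 1) (2 * r + 2) = stmtA (a + 1) (2 * r) + stmtA a (2 * r + 2) := by
  have l1 := stmtL1 a (2 * r + 1)
  have l1' := stmtL1 a (2 * r)
  have l3 := stmtL3 a (2 * r + 1)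
  have e : 2 * r + 1 + 1 = 2 * r + 2 := by omega
  rw [e] at l1 l3
  linarith

lemma stmtA_even (a r : ℕ) : stmtA a (2 * r) = ((a + r).choose r : ℤ) := by
  induction a generalizing r with
  | zero =>
    have h : stmtA 0 (2 * r) = ∑ k ∈ range (2 * r + 1), (-1 : ℤ) ^ k := by
      unfold stmtA
      apply Finset.sum_congr rfl
      intro k hk
      simp
    rw [h, neg_one_geom_sum, if_neg]
    · simp
    · simp [Nat.even_add_one, parity_simps]
  | succ a ih =>
    induction r with
    | zero => simpa using stmtA_zero_right (a + 1)
    | succ r ihr =>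
      have e : 2 * (r + 1) = 2 * r + 2 := by omega
      have ih' := ih (r + 1)
      rw [e] at ih' ⊢
      rw [stmtA_rec, ihr, ih']
      have h2 : a + 1 + (r + 1) = (a + 1 + r) + 1 := by omega
      rw [h2, Nat.choose_succ_succ]
      have h3 : a + (r + 1) = a + 1 + r := by omega
      rw [h3]
      push_cast
      ring

lemma stmtA_cast (a m : ℕ) : ((stmtA a m : ℤ) : ℚ) =
    ∑ k ∈ range (m + 1),
      (-1 : ℚ) ^ k * ((a + k).choose k : ℚ) * ((a + (m - k)).choose (m - k) : ℚ) := by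
  rw [stmtA]
  push_cast
  rfl

/-- Lemma on alternating sums of factorial ratios: for 1 ≤ i ≤ ⌊(n+1)/2⌋,
Σ_{j=i}^{n-i+1} (-1)^{j-i} (j-1)!(n-j)!/((j-i)!(n-i-j+1)!)
  = (2i-2)!!(n-1)!!/(2^{2i-2}(n-2i+1)!!) if n is odd, and 0 if n is even.
(Here n‼ is the double factorial with 0‼ = 1.) -/
theorem stmt14 (n i : ℕ) (hi : 1 ≤ i) (hin : i ≤ (n + 1) / 2) :
    ∑ j ∈ Finset.Icc i (n - i + 1),
        (-1 : ℚ) ^ (j - i) * (j - 1).factorial * (n - j).factorial /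
          ((j - i).factorial * (n + 1 - i - j).factorial)
      = if Odd n then
          ((Nat.doubleFactorial (2 * i - 2) : ℚ) * Nat.doubleFactorial (n - 1)) /
            (2 ^ (2 * i - 2) * Nat.doubleFactorial (n + 1 - 2 * i))
        else 0 := by
  obtain ⟨a, rfl⟩ : ∃ a, i = a + 1 := ⟨i - 1, by omega⟩
  have h2i : 2 * (a + 1) ≤ n + 1 := by omega
  obtain ⟨m, rfl⟩ : ∃ m, n = m + 2 * a + 1 := ⟨n - 2 * a - 1, by omega⟩
  have hset : Finset.Icc (a + 1) (m + 2 * a + 1 - (a + 1) + 1)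
      = Finset.map ⟨fun k => k + (a + 1), add_left_injective (a + 1)⟩ (Finset.range (m + 1)) := by
    ext j
    simp only [Finset.mem_Icc, Finset.mem_map, Finset.mem_range, Function.Embedding.coeFn_mk]
    constructor
    · rintro ⟨h1, h2⟩; exact ⟨j - (a + 1), by omega, by omega⟩
    · rintro ⟨k, hk, rfl⟩; omega
  rw [hset, Finset.sum_map]
  simp only [Function.Embedding.coeFn_mk]
  have hL : ∑ k ∈ Finset.range (m + 1),
      (-1 : ℚ) ^ (k + (a + 1) - (a + 1)) * ((k + (a + 1) - 1).factorial : ℚ) *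
        ((m + 2 * a + 1 - (k + (a + 1))).factorial : ℚ) /
        (((k + (a + 1) - (a + 1)).factorial : ℚ) *
          ((m + 2 * a + 1 + 1 - (a + 1) - (k + (a + 1))).factorial : ℚ))
      = ((a.factorial : ℚ)) ^ 2 * ((stmtA a m : ℤ) : ℚ) := by
    rw [stmtA_cast, Finset.mul_sum]
    apply Finset.sum_congr rfl
    intro k hk
    rw [Finset.mem_range] at hk
    have e1 : k + (a + 1) - (a + 1) = k := by omega
    have e2 : k + (a + 1) - 1 = a + k := by omega
    have e3 : m + 2 * a + 1 - (k + (a + 1)) = a + (m - k) := by omega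
    have e4 : m + 2 * a + 1 + 1 - (a + 1) - (k + (a + 1)) = m - k := by omega
    rw [e1, e2, e3, e4]
    rw [Nat.cast_choose ℚ (show k ≤ a + k by omega),
      Nat.cast_choose ℚ (show m - k ≤ a + (m - k) by omega)]
    have e5 : a + k - k = a := by omega
    have e6 : a + (m - k) - (m - k) = a := by omega
    rw [e5, e6]
    have f1 : ((k.factorial : ℚ)) ≠ 0 := Nat.cast_ne_zero.mpr (Nat.factorial_ne_zero k)
    have f2 : (((m - k).factorial : ℚ)) ≠ 0 := Nat.cast_ne_zero.mpr (Nat.factorial_ne_zero _)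
    have f3 : ((a.factorial : ℚ)) ≠ 0 := Nat.cast_ne_zero.mpr (Nat.factorial_ne_zero a)
    field_simp
  rw [hL]
  rcases Nat.even_or_odd m with ⟨r, hr⟩ | hodd
  · -- m even, n odd
    have hm : m = 2 * r := by omega
    subst hm
    rw [if_pos (show Odd (2 * r + 2 * a + 1) from ⟨r + a, by ring⟩)]
    rw [stmtA_even]
    have d1 : 2 * (a + 1) - 2 = 2 * a := by omega
    have d2 : 2 * r + 2 * a + 1 - 1 = 2 * (a + r) := by omega
    have d3 : 2 * r + 2 * a + 1 + 1 - 2 * (a + 1) = 2 * r := by omega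
    rw [d1, d2, d3, Nat.doubleFactorial_two_mul, Nat.doubleFactorial_two_mul,
      Nat.doubleFactorial_two_mul]
    push_cast
    rw [Nat.cast_choose ℚ (show r ≤ a + r by omega)]
    have e7 : a + r - r = a := by omega
    rw [e7]
    have f3 : ((a.factorial : ℚ)) ≠ 0 := Nat.cast_ne_zero.mpr (Nat.factorial_ne_zero a)
    have f4 : ((r.factorial : ℚ)) ≠ 0 := Nat.cast_ne_zero.mpr (Nat.factorial_ne_zero r)
    have f5 : (((a + r).factorial : ℚ)) ≠ 0 := Nat.cast_ne_zero.mpr (Nat.factorial_ne_zero _)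
    have f6 : ((2 : ℚ)) ≠ 0 := by norm_num
    field_simp
    ring
  · -- m odd, n even
    obtain ⟨t, rfl⟩ := hodd
    rw [stmtA_odd a (2 * t + 1) (by omega)]
    rw [if_neg (by rw [Nat.odd_iff]; omega)]
    simp
end

section
/- For each i with 0 ≤ i ≤ ⌊n/2⌋, the identity Σ_{j=i}^{n-i} (-1)^{j-i} (2j-1)! (2n-2j-1)! / ((j-i)! (j-1)! (n-i-j)! (n-j-1)!) equals (2i-1)!! (n-1)!! / (2^{2i-2n+2} (n-2i)!!) if n is even, and equals 0 if n is odd. -/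
open Finset

private def cc (i k : ℕ) : ℚ := (Nat.doubleFactorial (2*k + 2*i - 1) : ℚ) / (Nat.factorial k)

private def gg (i m : ℕ) : ℚ := ∑ k ∈ range (m+1), (-1)^k * cc i k * cc i (m - k)

private def hh (i m : ℕ) : ℚ := ∑ k ∈ range (m+1), (k : ℚ) * (-1)^k * cc i k * cc i (m - k)

private lemma df_odd (a : ℕ) :
    (Nat.doubleFactorial (2*a+1) : ℚ) = (2*a+1) * Nat.doubleFactorial (2*a-1) := by
  cases a with
  | zero => simp [Nat.doubleFactorial]
  | succ b =>
    have h1 : 2*(b+1)+1 = (2*(b+1)-1) + 2 := by omega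
    rw [h1, Nat.doubleFactorial_add_two]
    have h2 : ((2*(b+1)-1 : ℕ) : ℚ) = 2*(b+1)-1 := by
      have : (2*(b+1)-1 : ℕ) = 2*b+1 := by omega
      rw [this]; push_cast; ring
    push_cast [h2]; ring

private lemma cc_rec (i k : ℕ) : ((k:ℚ)+1) * cc i (k+1) = (2*k+2*i+1) * cc i k := by
  unfold cc
  have h1 : 2*(k+1) + 2*i - 1 = 2*(k+i)+1 := by omega
  have h2 : 2*(k+i) - 1 = 2*k + 2*i - 1 := by omega
  rw [h1, df_odd, h2, Nat.factorial_succ]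
  have h3 : (Nat.factorial k : ℚ) ≠ 0 := Nat.cast_ne_zero.mpr (Nat.factorial_ne_zero k)
  push_cast
  field_simp

private lemma neg_one_pow_sub (m j : ℕ) (h : j ≤ m) :
    ((-1:ℚ))^(m-j) = (-1)^m * (-1)^j := by
  have h1 : m - j + (j + j) = m + j := by omega
  have h2 := pow_add (-1:ℚ) (m-j) (j+j)
  rw [h1, pow_add] at h2
  have h3 : ((-1:ℚ))^(j+j) = 1 := by
    rw [← two_mul, pow_mul]; norm_num
  rw [h3, mul_one] at h2
  exact h2.symm

private lemma gg_reflect (i m : ℕ) : gg i m = (-1)^m * gg i m := by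
  conv_lhs => rw [gg, ← Finset.sum_range_reflect]
  rw [gg, Finset.mul_sum]
  refine Finset.sum_congr rfl fun k hk => ?_
  simp only [Finset.mem_range] at hk
  have hk' : k ≤ m := by omega
  have e1 : m + 1 - 1 - k = m - k := by omega
  have e2 : m - (m - k) = k := by omega
  rw [e1, e2, neg_one_pow_sub m k hk']
  ring

private lemma gg_odd (i m : ℕ) (hm : Odd m) : gg i m = 0 := by
  have := gg_reflect i m
  rw [hm.neg_one_pow] at this
  linarith

private lemma hh_reflect (i m : ℕ) : hh i m = (-1)^m * ((m:ℚ) * gg i m - hh i m) := by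
  conv_lhs => rw [hh, ← Finset.sum_range_reflect]
  rw [gg, hh, Finset.mul_sum, ← Finset.sum_sub_distrib, Finset.mul_sum]
  refine Finset.sum_congr rfl fun k hk => ?_
  simp only [Finset.mem_range] at hk
  have hk' : k ≤ m := by omega
  have e1 : m + 1 - 1 - k = m - k := by omega
  have e2 : m - (m - k) = k := by omega
  have e3 : ((m - k : ℕ) : ℚ) = (m:ℚ) - k := by
    rw [Nat.cast_sub hk']
  rw [e1, e2, e3, neg_one_pow_sub m k hk']
  ring

private lemma hh_even (i m : ℕ) (hm : Even m) : 2 * hh i m = (m:ℚ) * gg i m := by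
  have := hh_reflect i m
  rw [hm.neg_one_pow] at this
  linarith

private lemma hh_succ (i m : ℕ) : hh i (m+1) = -(2*(i:ℚ)+1) * gg i m - 2 * hh i m := by
  have hr : -(2*(i:ℚ)+1) * gg i m - 2 * hh i m
      = ∑ k ∈ range (m+1), (-(2*(i:ℚ)+1) * ((-1)^k * cc i k * cc i (m-k))
          - 2*((k:ℚ)*(-1)^k*cc i k*cc i (m-k))) := by
    rw [Finset.sum_sub_distrib, ← Finset.mul_sum, ← Finset.mul_sum, gg, hh]
  rw [hr, hh, Finset.sum_range_succ']
  simp only [Nat.cast_zero, zero_mul, add_zero]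
  refine Finset.sum_congr rfl fun k hk => ?_
  have e1 : m + 1 - (k+1) = m - k := by omega
  rw [e1]
  have hc := cc_rec i k
  push_cast
  linear_combination ((-1:ℚ)^(k+1) * cc i (m-k)) * hc

private lemma g_mul_succ (i m : ℕ) :
    ((m:ℚ)+1) * gg i (m+1) = 2*(m:ℚ)*gg i m - 4 * hh i m := by
  have hB : ∑ k ∈ range (m+2), ((m+1-k : ℕ):ℚ)*(-1)^k*cc i k*cc i (m+1-k)
      = (2*(m:ℚ)+2*(i:ℚ)+1) * gg i m - 2 * hh i m := by
    rw [Finset.sum_range_succ]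
    simp only [Nat.sub_self, Nat.cast_zero, zero_mul, add_zero]
    have hr : (2*(m:ℚ)+2*(i:ℚ)+1) * gg i m - 2 * hh i m
        = ∑ k ∈ range (m+1), ((2*(m:ℚ)+2*(i:ℚ)+1) * ((-1)^k * cc i k * cc i (m-k))
            - 2*((k:ℚ)*(-1)^k*cc i k*cc i (m-k))) := by
      rw [Finset.sum_sub_distrib, ← Finset.mul_sum, ← Finset.mul_sum, gg, hh]
    rw [hr]
    refine Finset.sum_congr rfl fun k hk => ?_
    simp only [Finset.mem_range] at hk
    have hk' : k ≤ m := by omega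
    have e1 : m + 1 - k = (m - k) + 1 := by omega
    have e2 : ((m - k : ℕ):ℚ) = (m:ℚ) - k := Nat.cast_sub hk'
    have hc := cc_rec i (m - k)
    rw [e2] at hc
    rw [e1]
    push_cast [e2]
    linear_combination ((-1:ℚ)^k * cc i k) * hc
  have hsplit : ((m:ℚ)+1) * gg i (m+1)
      = hh i (m+1) + ∑ k ∈ range (m+2), ((m+1-k : ℕ):ℚ)*(-1)^k*cc i k*cc i (m+1-k) := by
    rw [gg, hh, Finset.mul_sum, ← Finset.sum_add_distrib]
    refine Finset.sum_congr rfl fun k hk => ?_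
    simp only [Finset.mem_range] at hk
    rw [Nat.cast_sub (by omega : k ≤ m+1)]
    push_cast
    ring
  rw [hsplit, hB, hh_succ]
  ring

private lemma gg_step (i m : ℕ) (hm : Even m) :
    ((m:ℚ)+2) * gg i (m+2) = 4*((m:ℚ)+2*i+1) * gg i m := by
  have h1 := g_mul_succ i (m+1)
  have h2 : gg i (m+1) = 0 := gg_odd i (m+1) (Even.add_one hm)
  have h3 := hh_succ i m
  have h4 := hh_even i m hm
  push_cast at h1
  linear_combination h1 + 2*((m:ℚ)+1)*h2 - 4*h3 + 4*h4

private lemma gg_closed (i r : ℕ) :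
    gg i (2*r) = (Nat.doubleFactorial (2*i-1) : ℚ) * Nat.doubleFactorial (2*i+2*r-1)
      * 2^r / Nat.factorial r := by
  induction r with
  | zero =>
    rw [gg]
    simp only [Nat.mul_zero, Nat.zero_add, Finset.range_one, Finset.sum_singleton,
      pow_zero, one_mul, Nat.sub_zero, Nat.factorial_zero, Nat.cast_one, mul_one, div_one]
    rw [cc]
    have e : 2*0 + 2*i - 1 = 2*i - 1 := by omega
    rw [e]
    simp [Nat.factorial_zero]
  | succ r ih =>
    have hstep := gg_step i (2*r) (even_two_mul r)
    have e0 : 2*(r+1) = 2*r+2 := by ring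
    rw [e0]
    have hne : ((2*r:ℚ)+2) ≠ 0 := by positivity
    have hval : gg i (2*r+2) = 4*((2*r:ℚ)+2*i+1) * gg i (2*r) / ((2*r:ℚ)+2) := by
      field_simp
      push_cast at hstep
      linear_combination hstep
    rw [hval, ih]
    have e1 : 2*i + (2*r+2) - 1 = 2*(i+r)+1 := by omega
    have e2 : 2*(i+r) - 1 = 2*i + 2*r - 1 := by omega
    rw [e1, df_odd, e2, Nat.factorial_succ]
    have h3 : (Nat.factorial r : ℚ) ≠ 0 := Nat.cast_ne_zero.mpr (Nat.factorial_ne_zero r)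
    push_cast
    field_simp
    ring



/-- Lemma on alternating sums: for 0 ≤ i ≤ ⌊n/2⌋,
Σ_{j=i}^{n-i} (-1)^{j-i} (2j-1)!(2n-2j-1)!/((j-i)!(j-1)!(n-i-j)!(n-j-1)!)
  = (2i-1)!!(n-1)!!/(2^{2i-2n+2}(n-2i)!!) if n is even, and 0 if n is odd.
Per the double factorial conventions 0‼ = (-1)‼ = 1, each summand is written via
the identity (2j-1)!/(j-1)! = (2j-1)‼·2^{j-1} (and its analogue for the factor
(2n-2j-1)!/(n-j-1)!), which extends the boundary terms exactly as the stated
convention (terms with factorials of negative integers) requires; the right-hand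
side 1/2^{2i-2n+2} is written as 2^{2n}/2^{2i+2}. -/
theorem stmt15 (n i : ℕ) (h2i : 2 * i ≤ n) (hn : 1 ≤ n) :
    ∑ j ∈ Finset.Icc i (n - i),
        (-1 : ℚ) ^ (j - i) *
          (2 ^ (n - 2) * (Nat.doubleFactorial (2 * j - 1) : ℚ) *
            Nat.doubleFactorial (2 * (n - j) - 1)) /
          ((j - i).factorial * (n - i - j).factorial)
      = if Even n then
          ((Nat.doubleFactorial (2 * i - 1) : ℚ) * Nat.doubleFactorial (n - 1)
              * 2 ^ (2 * n)) /
            (2 ^ (2 * i + 2) * Nat.doubleFactorial (n - 2 * i))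
        else 0 := by
  set m := n - 2*i with hmdef
  rw [← Finset.Ico_add_one_right_eq_Icc, Finset.sum_Ico_eq_sum_range]
  have hcnt : n - i + 1 - i = m + 1 := by omega
  rw [hcnt]
  trans ((2:ℚ)^(n-2) * gg i m)
  · rw [gg, Finset.mul_sum]
    refine Finset.sum_congr rfl fun k hk => ?_
    simp only [Finset.mem_range] at hk
    have e1 : i + k - i = k := by omega
    have e2 : 2*(i+k) - 1 = 2*k+2*i-1 := by omega
    have e3 : 2*(n-(i+k)) - 1 = 2*(m-k)+2*i-1 := by omega
    have e4 : n - i - (i+k) = m - k := by omega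
    rw [e1, e2, e3, e4, cc, cc]
    ring
  · rcases Nat.even_or_odd n with he | ho
    · rw [if_pos he]
      have hr : ∃ r, m = 2*r := by
        obtain ⟨t, ht⟩ := he; exact ⟨t - i, by omega⟩
      obtain ⟨r, hr⟩ := hr
      rw [hr, gg_closed]
      have e5 : 2*i + 2*r - 1 = n - 1 := by omega
      have e6 : m = 2*r := hr
      rw [e5, Nat.doubleFactorial_two_mul]
      have hfact : (Nat.factorial r : ℚ) ≠ 0 := Nat.cast_ne_zero.mpr (Nat.factorial_ne_zero r)
      have hn2 : 2 ≤ n := by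
        rcases he with ⟨t, ht⟩; omega
      have hpow : (2:ℚ)^(2*n) = 2^(n-2) * 2^r * (2^(2*i+2) * 2^r) := by
        rw [← pow_add, ← pow_add, ← pow_add]; congr 1; omega
      push_cast
      rw [hpow]
      field_simp
    · rw [if_neg (by simp [Nat.even_iff, Nat.odd_iff.mp ho])]
      have hodd : Odd m := by
        rcases ho with ⟨t, ht⟩; exact ⟨t - i, by omega⟩
      rw [gg_odd i m hodd, mul_zero]
end
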